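/- arXiv:1606.05514 — 11 statements merged into one kernel-verified Lean document; each statement's English description precedes it below -/
import Mathlib

section
/- Let k ≥ 1 and let m_1, …, m_k be positive integers with m = m_1 + ⋯ + m_k; index the rows and columns of m×m real matrices by pairs (i,j) with 1 ≤ i ≤ k and 1 ≤ j ≤ m_i. Let 0 < a ≤ b be real numbers and let L be the m×m matrix whose ((i,j),(i',j')) entry equals a if i = i' and equals b if i ≠ i'. Let F and G be m×m real symmetric positive semidefinite matrices such that G is the Hadamard (entrywise) product of F and L, and let C be an m×m diagonal matrix with strictly positive diagonal entries. Then Tr[(F + C)⁻¹ G] ≤ Tr[(F_Diag + C)⁻¹ G_Diag]. -/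
/-! With `A = F + C` and `F_B` the block-diagonal part of `F`, we have `G = b F - (b - a) F_B`.
Writing `A = Bᴴ B`, the matrix `Y = B X B⁻¹` satisfies `Tr(Yᴴ Y) = Tr(A⁻¹ X A X)` and
`Tr(Y Y) = Tr(X X)`, so `Tr(X X) ≤ Tr(A⁻¹ X A X)` for symmetric `X`. Applied to the coordinate
projections of the blocks this gives `Tr(A⁻¹ A_B) ≥ dim`, i.e. `Tr(A⁻¹ F) ≤ Tr(A⁻¹ F_B)`, whence
`Tr(A⁻¹ G) ≤ a Tr(A⁻¹ F)`. Applied to a single coordinate it gives `(A⁻¹)_pp ≥ 1 / A_pp`, so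
`Tr(A⁻¹ F) = ∑ (1 - (A⁻¹)_pp c_p) ≤ ∑ F_pp / (F_pp + c_p)`; as `G_pp = a F_pp`, `a` times this
sum is the right-hand side. -/

open Matrix

namespace Matrix

section blockDiagPart

variable {n ι α : Type*} [DecidableEq ι]

def blockDiagPart [Zero α] (f : n → ι) (A : Matrix n n α) : Matrix n n α :=
  of fun p q => if f p = f q then A p q else 0

theorem blockDiagPart_add_diagonal [DecidableEq n] [AddZeroClass α] (f : n → ι)
    (A : Matrix n n α) (c : n → α) :
    blockDiagPart f (A + diagonal c) = blockDiagPart f A + diagonal c := by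
  ext p q
  by_cases hpq : p = q
  · subst hpq; simp [blockDiagPart]
  · by_cases hf : f p = f q <;> simp [blockDiagPart, hpq, hf]

theorem blockDiagPart_eq_sum [Fintype n] [DecidableEq n] [Fintype ι] [Semiring α] (f : n → ι)
    (A : Matrix n n α) :
    blockDiagPart f A = ∑ i, diagonal (fun p => if p ∈ ({q | f q = i} : Finset n) then 1 else 0) *
      A * diagonal (fun p => if p ∈ ({q | f q = i} : Finset n) then 1 else 0) := by
  ext p q
  by_cases hpq : f p = f q <;> simp [blockDiagPart, sum_apply, hpq]

theorem hadamard_eq_smul_sub_smul_blockDiagPart [CommRing α] (f : n → ι) {a b : α}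
    {L : Matrix n n α} (hL : ∀ p q, L p q = if f p = f q then a else b) (F : Matrix n n α) :
    F ⊙ L = b • F - (b - a) • blockDiagPart f F := by
  ext p q
  by_cases hf : f p = f q <;> simp [blockDiagPart, hL, hf] <;> ring

end blockDiagPart

variable {n ι : Type*} [Fintype n] [DecidableEq n]

theorem PosDef.trace_mul_self_le_trace_inv_mul_mul_mul {A : Matrix n n ℝ} (hA : A.PosDef)
    {X : Matrix n n ℝ} (hX : X.IsHermitian) :
    trace (X * X) ≤ trace (A⁻¹ * X * A * X) := by
  open scoped MatrixOrder in
  obtain ⟨B, hBA⟩ := CStarAlgebra.nonneg_iff_eq_star_mul_self.mp hA.posSemidef.nonneg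
  rw [star_eq_conjTranspose] at hBA
  have hB : IsUnit B.det := by
    refine isUnit_iff_ne_zero.2 fun h => hA.det_pos.ne' ?_
    rw [hBA, det_mul, h, mul_zero]
  set Y := B * X * B⁻¹
  have hYY : trace (Y * Y) = trace (X * X) := by
    simp only [Y, Matrix.mul_assoc, nonsing_inv_mul_cancel_left _ _ hB]
    rw [trace_mul_comm, Matrix.mul_assoc, Matrix.mul_assoc, nonsing_inv_mul _ hB, Matrix.mul_one]
  have hYHY : trace (Yᴴ * Y) = trace (A⁻¹ * X * A * X) := by
    have hAinv : A⁻¹ = B⁻¹ * B⁻¹ᴴ := by rw [hBA, mul_inv_rev, conjTranspose_nonsing_inv]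
    have : Yᴴ * Y = B⁻¹ᴴ * (X * A * X * B⁻¹) := by
      simp only [Y, conjTranspose_mul, hX.eq, hBA, Matrix.mul_assoc]
    rw [this, trace_mul_comm, Matrix.mul_assoc, ← hAinv, trace_mul_comm]
    simp only [Matrix.mul_assoc]
  have hYHYH : trace (Yᴴ * Yᴴ) = trace (Y * Y) := by
    rw [← conjTranspose_mul, trace_conjTranspose, star_trivial]
  have hsq : 0 ≤ trace ((Y - Yᴴ)ᴴ * (Y - Yᴴ)) := (posSemidef_conjTranspose_mul_self _).trace_nonneg
  have hexp : (Y - Yᴴ)ᴴ * (Y - Yᴴ) = Yᴴ * Y - Yᴴ * Yᴴ - Y * Y + Y * Yᴴ := by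
    rw [conjTranspose_sub, conjTranspose_conjTranspose]
    noncomm_ring
  rw [hexp, trace_add, trace_sub, trace_sub, trace_mul_comm Y Yᴴ] at hsq
  linarith

theorem PosDef.card_le_trace_inv_mul_compress {A : Matrix n n ℝ} (hA : A.PosDef)
    (s : Finset n) :
    (s.card : ℝ) ≤ trace (A⁻¹ * (diagonal (fun p => if p ∈ s then 1 else 0) * A *
      diagonal (fun p => if p ∈ s then 1 else 0))) := by
  have h := hA.trace_mul_self_le_trace_inv_mul_mul_mul
    (isHermitian_diagonal (fun p => if p ∈ s then (1 : ℝ) else 0))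
  rw [diagonal_mul_diagonal, trace_diagonal] at h
  simpa [Matrix.mul_assoc] using h

theorem PosDef.one_le_apply_mul_inv_apply {A : Matrix n n ℝ} (hA : A.PosDef) (p : n) :
    1 ≤ A p p * A⁻¹ p p := by
  simpa [trace, mul_apply, diagonal_apply, mul_comm] using hA.card_le_trace_inv_mul_compress {p}

theorem PosDef.card_le_trace_inv_mul_blockDiagPart [Fintype ι] [DecidableEq ι]
    {A : Matrix n n ℝ} (hA : A.PosDef) (f : n → ι) :
    (Fintype.card n : ℝ) ≤ trace (A⁻¹ * blockDiagPart f A) := by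
  rw [blockDiagPart_eq_sum, Finset.mul_sum, trace_sum, ← Finset.card_univ,
    Finset.card_eq_sum_card_fiberwise (f := f) (t := Finset.univ) (fun _ _ => Finset.mem_univ _)]
  push_cast
  exact Finset.sum_le_sum fun i _ => hA.card_le_trace_inv_mul_compress _

theorem trace_inv_diagonal_mul_diagonal {K : Type*} [Field K] {d : n → K} (hd : ∀ p, d p ≠ 0)
    (e : n → K) : trace ((diagonal d)⁻¹ * diagonal e) = ∑ p, e p / d p := by
  have hinv : (diagonal d)⁻¹ = diagonal fun p => (d p)⁻¹ :=
    inv_eq_left_inv <| by rw [diagonal_mul_diagonal, ← diagonal_one]; simp [hd]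
  simp [hinv, trace_diagonal, div_eq_inv_mul]

theorem trace_inv_add_mul_eq_card_sub {F D : Matrix n n ℝ} (hFD : IsUnit (F + D).det) :
    trace ((F + D)⁻¹ * F) = Fintype.card n - trace ((F + D)⁻¹ * D) := by
  rw [← trace_one, ← nonsing_inv_mul _ hFD, Matrix.mul_add, trace_add]
  ring

theorem trace_inv_add_diagonal_mul_le_sum_div {F : Matrix n n ℝ} {c : n → ℝ}
    (hA : (F + diagonal c).PosDef) (hc : ∀ p, 0 ≤ c p) :
    trace ((F + diagonal c)⁻¹ * F) ≤ ∑ p, F p p / (F p p + c p) := by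
  rw [trace_inv_add_mul_eq_card_sub hA.det_pos.ne'.isUnit, trace, Fintype.card_eq_sum_ones,
    Nat.cast_sum, ← Finset.sum_sub_distrib]
  refine Finset.sum_le_sum fun p _ => ?_
  have hApp : (F + diagonal c) p p = F p p + c p := by simp
  have hpos : 0 < F p p + c p := hApp ▸ hA.diag_pos
  have hinv := hApp ▸ hA.one_le_apply_mul_inv_apply p
  rw [diag_apply, mul_diagonal, Nat.cast_one, le_div_iff₀ hpos]
  nlinarith [hc p]

theorem trace_inv_add_diagonal_mul_le_blockDiagPart [Fintype ι] [DecidableEq ι]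
    {F : Matrix n n ℝ} {c : n → ℝ} (hA : (F + diagonal c).PosDef) (f : n → ι) :
    trace ((F + diagonal c)⁻¹ * F) ≤ trace ((F + diagonal c)⁻¹ * blockDiagPart f F) := by
  have h := hA.card_le_trace_inv_mul_blockDiagPart f
  rw [blockDiagPart_add_diagonal, Matrix.mul_add, trace_add] at h
  rw [trace_inv_add_mul_eq_card_sub hA.det_pos.ne'.isUnit]
  linarith

end Matrix

theorem stmt_0_general {k : ℕ} (m : Fin k → ℕ)
    (a b : ℝ) (ha : 0 < a) (hab : a ≤ b)
    (L F G : Matrix (Σ i : Fin k, Fin (m i)) (Σ i : Fin k, Fin (m i)) ℝ)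
    (hL : ∀ p q : Σ i : Fin k, Fin (m i), L p q = if p.1 = q.1 then a else b)
    (hF : F.PosSemidef) (hFG : G = F ⊙ L)
    (c : (Σ i : Fin k, Fin (m i)) → ℝ) (hc : ∀ p, 0 < c p) :
    Matrix.trace ((F + Matrix.diagonal c)⁻¹ * G) ≤
      Matrix.trace ((Matrix.diagonal (fun p => F p p) + Matrix.diagonal c)⁻¹ *
        Matrix.diagonal (fun p => G p p)) := by
  have hA : (F + diagonal c).PosDef := PosDef.posSemidef_add hF (PosDef.diagonal hc)
  have hG : G = b • F - (b - a) • blockDiagPart Sigma.fst F :=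
    hFG.trans (hadamard_eq_smul_sub_smul_blockDiagPart Sigma.fst hL F)
  have hRHS : trace ((diagonal (fun p => F p p) + diagonal c)⁻¹ * diagonal (fun p => G p p)) =
      a * ∑ p, F p p / (F p p + c p) := by
    rw [diagonal_add, trace_inv_diagonal_mul_diagonal fun p => by
      linarith [hF.diag_nonneg (i := p), hc p], Finset.mul_sum]
    refine Finset.sum_congr rfl fun p _ => ?_
    simp only [hFG, hadamard_apply, hL, ↓reduceIte]
    ring
  have hblock := trace_inv_add_diagonal_mul_le_blockDiagPart hA Sigma.fst
  have hdiag := trace_inv_add_diagonal_mul_le_sum_div hA fun p => (hc p).le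
  rw [hRHS, hG, Matrix.mul_sub, Matrix.mul_smul, Matrix.mul_smul, trace_sub, trace_smul,
    trace_smul, smul_eq_mul, smul_eq_mul]
  linarith [mul_le_mul_of_nonneg_left hblock (sub_nonneg.2 hab),
    mul_le_mul_of_nonneg_left hdiag ha.le]

/-- **Reverse majorization inequality** (Theorem B.1 of the paper).
Indices are pairs `(i, j)` with `i : Fin k`, `j : Fin (m i)`.  `L` has entry `a` on the
diagonal blocks and `b` off the diagonal blocks, `G = F ⊙ L` (Hadamard product), `F, G` are
positive semidefinite and `C = diagonal c` with positive diagonal.  Then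
`Tr[(F + C)⁻¹ G] ≤ Tr[(F_Diag + C)⁻¹ G_Diag]`. -/
theorem stmt_0 {k : ℕ} (hk : 1 ≤ k) (m : Fin k → ℕ) (hm : ∀ i, 0 < m i)
    (a b : ℝ) (ha : 0 < a) (hab : a ≤ b)
    (L F G : Matrix (Σ i : Fin k, Fin (m i)) (Σ i : Fin k, Fin (m i)) ℝ)
    (hL : ∀ p q : Σ i : Fin k, Fin (m i), L p q = if p.1 = q.1 then a else b)
    (hF : F.PosSemidef) (hG : G.PosSemidef) (hFG : G = F ⊙ L)
    (c : (Σ i : Fin k, Fin (m i)) → ℝ) (hc : ∀ p, 0 < c p) :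
    Matrix.trace ((F + Matrix.diagonal c)⁻¹ * G) ≤
      Matrix.trace ((Matrix.diagonal (fun p => F p p) + Matrix.diagonal c)⁻¹ *
        Matrix.diagonal (fun p => G p p)) :=
  stmt_0_general m a b ha hab L F G hL hF hFG c hc
end

section
/- Let k ≥ 1 and let m_1, …, m_k be positive integers with m = m_1 + ⋯ + m_k; index the rows and columns of m×m matrices by pairs (i,j) with 1 ≤ i ≤ k and 1 ≤ j ≤ m_i. Let A be an m×m Hermitian positive semidefinite matrix that is block diagonal with respect to this partition (its ((i,j),(i',j')) entry is 0 whenever i ≠ i'), let B be an m×m Hermitian matrix that is block off-diagonal (its ((i,j),(i',j')) entry is 0 whenever i = i') and such that A + B is positive semidefinite, and let C be an m×m diagonal matrix with strictly positive diagonal entries. Then Tr[(A + B + C)⁻¹ B] ≤ 0. -/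
/-!
Put `Y = A + C`, which is positive definite and block diagonal, so `Y⁻¹` is block diagonal and
`Tr[Y⁻¹ B] = 0` because `B` is block off-diagonal. It then suffices that
`Tr[(Y + B)⁻¹ B] ≤ Tr[Y⁻¹ B]` whenever `Y` and `Y + B` are positive definite. With `X = Y + B`
this is `2 m ≤ Tr[X⁻¹ Y] + Tr[Y⁻¹ X]`, the expansion of
`0 ≤ Tr[(Y⁻¹ - X⁻¹) X (Y⁻¹ - X⁻¹) Y]`.
-/

open Matrix

namespace Matrix

section BlockDiagonal

variable {n R α : Type*}

def IsBlockDiagonal [Zero R] (M : Matrix n n R) (b : n → α) : Prop :=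
  ∀ i j, b i ≠ b j → M i j = 0

theorem IsBlockDiagonal.add [AddZeroClass R] {M N : Matrix n n R} {b : n → α}
    (hM : M.IsBlockDiagonal b) (hN : N.IsBlockDiagonal b) : (M + N).IsBlockDiagonal b :=
  fun i j h => by rw [add_apply, hM i j h, hN i j h, add_zero]

theorem isBlockDiagonal_diagonal [DecidableEq n] [Zero R] (d : n → R) (b : n → α) :
    (diagonal d).IsBlockDiagonal b :=
  fun _ _ h => diagonal_apply_ne d fun hij => h (congrArg b hij)

theorem IsBlockDiagonal.inv [Fintype n] [DecidableEq n] [CommRing R] [LinearOrder α]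
    {M : Matrix n n R} {b : n → α} (hM : M.IsBlockDiagonal b) : M⁻¹.IsBlockDiagonal b := by
  by_cases hdet : IsUnit M.det
  · have := invertibleOfIsUnitDet M hdet
    have hlower : M⁻¹.BlockTriangular b :=
      blockTriangular_inv_of_blockTriangular fun i j h => hM i j h.ne'
    have hupper : M⁻¹.BlockTriangular (OrderDual.toDual ∘ b) :=
      blockTriangular_inv_of_blockTriangular fun i j h => hM i j h.ne'
    intro i j h
    rcases h.lt_or_gt with hij | hji
    · exact hupper hij
    · exact hlower hji
  · rw [nonsing_inv_apply_not_isUnit M hdet]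
    exact fun _ _ _ => rfl

theorem IsBlockDiagonal.trace_mul_eq_zero [Fintype n] [NonUnitalNonAssocSemiring R]
    {M N : Matrix n n R} {b : n → α} (hM : M.IsBlockDiagonal b) (hN : ∀ i j, b i = b j → N i j = 0) :
    (M * N).trace = 0 := by
  refine Finset.sum_eq_zero fun i _ => Finset.sum_eq_zero fun j _ => ?_
  change M i j * N j i = 0
  by_cases h : b i = b j
  · rw [hN j i h.symm, mul_zero]
  · rw [hM i j h, zero_mul]

end BlockDiagonal

section PosDef

variable {n 𝕜 : Type*} [Fintype n] [DecidableEq n] [RCLike 𝕜]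

open scoped ComplexOrder

theorem PosSemidef.trace_mul_nonneg {P Q : Matrix n n 𝕜} (hP : P.PosSemidef)
    (hQ : Q.PosSemidef) : 0 ≤ (P * Q).trace := by
  open scoped MatrixOrder in
  obtain ⟨R, rfl⟩ := CStarAlgebra.nonneg_iff_eq_star_mul_self.mp hQ.nonneg
  calc 0 ≤ (R * P * Rᴴ).trace := (hP.mul_mul_conjTranspose_same R).trace_nonneg
    _ = (P * (Rᴴ * R)).trace := by rw [trace_mul_cycle, trace_mul_comm]

theorem PosDef.two_mul_card_le_trace_inv_mul_add {X Y : Matrix n n 𝕜} (hX : X.PosDef)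
    (hY : Y.PosDef) :
    2 * (Fintype.card n : 𝕜) ≤ (X⁻¹ * Y).trace + (Y⁻¹ * X).trace := by
  have hXdet := (isUnit_iff_isUnit_det X).mp hX.isUnit
  have hYY : Y⁻¹ * Y = 1 := nonsing_inv_mul Y ((isUnit_iff_isUnit_det Y).mp hY.isUnit)
  have hexpand : ((Y⁻¹ - X⁻¹) * X * (Y⁻¹ - X⁻¹)ᴴ * Y).trace
      = (Y⁻¹ * X).trace - 2 * (Fintype.card n : 𝕜) + (X⁻¹ * Y).trace := by
    rw [conjTranspose_sub, hX.inv.isHermitian.eq, hY.inv.isHermitian.eq]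
    simp only [sub_mul, mul_sub, Matrix.mul_assoc, mul_nonsing_inv X hXdet,
      nonsing_inv_mul X hXdet, hYY, Matrix.mul_one, Matrix.one_mul, trace_sub, trace_one]
    ring
  have hnonneg := (hX.posSemidef.mul_mul_conjTranspose_same (Y⁻¹ - X⁻¹)).trace_mul_nonneg
    hY.posSemidef
  rw [hexpand] at hnonneg
  linear_combination hnonneg

theorem PosDef.trace_inv_add_mul_le {Y B : Matrix n n 𝕜} (hY : Y.PosDef) (hYB : (Y + B).PosDef) :
    ((Y + B)⁻¹ * B).trace ≤ (Y⁻¹ * B).trace := by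
  have hYY : Y⁻¹ * Y = 1 := nonsing_inv_mul Y ((isUnit_iff_isUnit_det Y).mp hY.isUnit)
  have hinv : (Y + B)⁻¹ * (Y + B) = 1 :=
    nonsing_inv_mul _ ((isUnit_iff_isUnit_det _).mp hYB.isUnit)
  have hcard := hYB.two_mul_card_le_trace_inv_mul_add hY
  rw [Matrix.mul_add, trace_add, hYY, trace_one] at hcard
  have htr := congrArg trace hinv
  rw [Matrix.mul_add, trace_add, trace_one] at htr
  linear_combination hcard + htr

end PosDef

end Matrix

theorem stmt_1_general {k : ℕ} (m : Fin k → ℕ)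
    (A B : Matrix (Σ i : Fin k, Fin (m i)) (Σ i : Fin k, Fin (m i)) ℝ)
    (hA : A.PosSemidef)
    (hAblock : ∀ p q : Σ i : Fin k, Fin (m i), p.1 ≠ q.1 → A p q = 0)
    (hBblock : ∀ p q : Σ i : Fin k, Fin (m i), p.1 = q.1 → B p q = 0)
    (hAB : (A + B).PosSemidef)
    (c : (Σ i : Fin k, Fin (m i)) → ℝ) (hc : ∀ p, 0 < c p) :
    Matrix.trace ((A + B + Matrix.diagonal c)⁻¹ * B) ≤ 0 := by
  have hC : (diagonal c).PosDef := posDef_diagonal_iff.mpr hc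
  have hY : (A + diagonal c).IsBlockDiagonal Sigma.fst :=
    IsBlockDiagonal.add hAblock (isBlockDiagonal_diagonal c _)
  have hX : (A + B + diagonal c).PosDef := PosDef.posSemidef_add hAB hC
  rw [add_right_comm] at hX ⊢
  calc ((A + diagonal c + B)⁻¹ * B).trace ≤ ((A + diagonal c)⁻¹ * B).trace :=
        (PosDef.posSemidef_add hA hC).trace_inv_add_mul_le hX
    _ = 0 := hY.inv.trace_mul_eq_zero hBblock

/-- If `A` is Hermitian positive semidefinite and block diagonal, `B` is Hermitian and block
off-diagonal with `A + B` positive semidefinite, and `C` is a diagonal matrix with strictly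
positive diagonal entries, then `Tr[(A + B + C)⁻¹ B] ≤ 0`. -/
theorem stmt_1 {k : ℕ} (hk : 1 ≤ k) (m : Fin k → ℕ) (hm : ∀ i, 0 < m i)
    (A B : Matrix (Σ i : Fin k, Fin (m i)) (Σ i : Fin k, Fin (m i)) ℝ)
    (hA : A.PosSemidef)
    (hAblock : ∀ p q : Σ i : Fin k, Fin (m i), p.1 ≠ q.1 → A p q = 0)
    (hB : B.IsHermitian)
    (hBblock : ∀ p q : Σ i : Fin k, Fin (m i), p.1 = q.1 → B p q = 0)
    (hAB : (A + B).PosSemidef)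
    (c : (Σ i : Fin k, Fin (m i)) → ℝ) (hc : ∀ p, 0 < c p) :
    Matrix.trace ((A + B + Matrix.diagonal c)⁻¹ * B) ≤ 0 :=
  stmt_1_general m A B hA hAblock hBblock hAB c hc
end

section
/- Let F be an n×n Hermitian positive semidefinite matrix and let C be an n×n diagonal matrix with strictly positive diagonal entries. Then Tr[(F + C)⁻¹ F] ≤ Tr[(F_Diag + C)⁻¹ F_Diag]. -/
open Matrix

/-!
Writing `A = F + C`, we have `A⁻¹ F = 1 - A⁻¹ C`, so
`Tr[A⁻¹ F] = n - ∑ᵢ cᵢ (A⁻¹)ᵢᵢ`, and likewise `Tr[(F_Diag + C)⁻¹ F_Diag] = n - ∑ᵢ cᵢ / Aᵢᵢ`.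
The inequality therefore reduces to `1 / Aᵢᵢ ≤ (A⁻¹)ᵢᵢ` for the positive definite `A`, which is
Cauchy–Schwarz `|⟨eᵢ, A⁻¹eᵢ⟩_A|² ≤ ⟨eᵢ, eᵢ⟩_A ⟨A⁻¹eᵢ, A⁻¹eᵢ⟩_A` for the inner product
`⟨x, y⟩_A = xᴴ A y`.
-/

theorem Matrix.trace_inv_add_diagonal_mul {n R : Type*} [Fintype n] [DecidableEq n] [CommRing R]
    (B : Matrix n n R) (c : n → R) (h : IsUnit (B + diagonal c).det) :
    trace ((B + diagonal c)⁻¹ * B) = Fintype.card n - ∑ i, c i * (B + diagonal c)⁻¹ i i := by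
  nth_rw 2 [← add_sub_cancel_right B (diagonal c)]
  rw [mul_sub, nonsing_inv_mul _ h]
  simp [trace, mul_comm]

theorem Matrix.inv_diagonal_of_ne_zero {n K : Type*} [Fintype n] [DecidableEq n] [Field K]
    {d : n → K} (hd : ∀ i, d i ≠ 0) : (diagonal d)⁻¹ = diagonal d⁻¹ := by
  refine inv_eq_right_inv ?_
  rw [diagonal_mul_diagonal, ← diagonal_one]
  exact congrArg diagonal (funext fun i => mul_inv_cancel₀ (hd i))

namespace Matrix.PosDef

open scoped ComplexOrder

variable {n 𝕜 : Type*} [Fintype n] [DecidableEq n] [RCLike 𝕜] {A : Matrix n n 𝕜}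

theorem one_le_re_mul_re_inv_apply (hA : A.PosDef) (i : n) :
    1 ≤ RCLike.re (A i i) * RCLike.re (A⁻¹ i i) := by
  let := A.toSeminormedAddCommGroup hA.posSemidef
  let := A.toInnerProductSpace hA.posSemidef
  set e : n → 𝕜 := Pi.single i 1
  have hAA : A *ᵥ (A⁻¹ *ᵥ e) = e := by
    rw [mulVec_mulVec, mul_nonsing_inv _ (hA.isUnit.map detMonoidHom), one_mulVec]
  have h_xy : inner 𝕜 e (A⁻¹ *ᵥ e) = 1 := by
    change (A *ᵥ (A⁻¹ *ᵥ e)) ⬝ᵥ star e = 1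
    rw [hAA]
    simp [e]
  have h_yx : inner 𝕜 (A⁻¹ *ᵥ e) e = 1 := by
    rw [← inner_conj_symm, h_xy, map_one]
  have h_xx : inner 𝕜 e e = A i i := by
    change (A *ᵥ e) ⬝ᵥ star e = A i i
    simp [e]
  have h_yy : inner 𝕜 (A⁻¹ *ᵥ e) (A⁻¹ *ᵥ e) = star (A⁻¹ i i) := by
    change (A *ᵥ (A⁻¹ *ᵥ e)) ⬝ᵥ star (A⁻¹ *ᵥ e) = star (A⁻¹ i i)
    rw [hAA]
    simp [e]
  have cauchy_schwarz := inner_mul_inner_self_le (𝕜 := 𝕜) e (A⁻¹ *ᵥ e)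
  rw [h_xy, h_yx, h_xx, h_yy, RCLike.star_def, RCLike.conj_re, norm_one, one_mul]
    at cauchy_schwarz
  exact cauchy_schwarz

theorem inv_re_apply_le_re_inv_apply (hA : A.PosDef) (i : n) :
    (RCLike.re (A i i))⁻¹ ≤ RCLike.re (A⁻¹ i i) := by
  have h_pos : 0 < RCLike.re (A i i) := (RCLike.pos_iff.mp hA.diag_pos).1
  rw [inv_le_iff_one_le_mul₀' h_pos]
  exact hA.one_le_re_mul_re_inv_apply i

end Matrix.PosDef

/-- If `F` is Hermitian positive semidefinite and `C` is a diagonal matrix with strictly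
positive diagonal entries, then `Tr[(F + C)⁻¹ F] ≤ Tr[(F_Diag + C)⁻¹ F_Diag]`. -/
theorem stmt_2 {n : ℕ} (F : Matrix (Fin n) (Fin n) ℝ) (hF : F.PosSemidef)
    (c : Fin n → ℝ) (hc : ∀ i, 0 < c i) :
    Matrix.trace ((F + Matrix.diagonal c)⁻¹ * F) ≤
      Matrix.trace ((Matrix.diagonal (fun i => F i i) + Matrix.diagonal c)⁻¹ *
        Matrix.diagonal (fun i => F i i)) := by
  have hA : (F + diagonal c).PosDef := PosDef.posSemidef_add hF (.diagonal hc)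
  have hdiag_pos : ∀ i, 0 < F i i + c i :=
    fun i => add_pos_of_nonneg_of_pos hF.diag_nonneg (hc i)
  have hA_diag : (diagonal (fun i => F i i) + diagonal c).PosDef := by
    rw [diagonal_add]
    exact .diagonal hdiag_pos
  rw [trace_inv_add_diagonal_mul _ _ hA.det_pos.ne'.isUnit,
    trace_inv_add_diagonal_mul _ _ hA_diag.det_pos.ne'.isUnit,
    diagonal_add, inv_diagonal_of_ne_zero fun i => (hdiag_pos i).ne']
  gcongr with i
  · exact (hc i).le
  · simpa using hA.inv_re_apply_le_re_inv_apply i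
end

section
/- Let Ω be a closed interval in ℝ, let A be an n×n Hermitian matrix all of whose eigenvalues lie in Ω, and let f : Ω → ℝ be a convex function. Then Tr(f(A)) ≥ Tr(f(A_Diag)). -/
/-!
Diagonalize `A = U Λ U*`. Then `A i i = ∑ j |U i j|² λ j`, and `(|U i j|²)` is doubly stochastic
because `U` is unitary; Jensen's inequality along each row followed by summing over the columns
gives `∑ f (A i i) ≤ ∑ f (λ j)`. The left-hand side is `Tr f(A_Diag)`, since the eigenvalues of a
diagonal matrix are its diagonal entries up to order.
-/

open Matrix Finset

namespace Matrix

variable {n 𝕜 : Type*} [Fintype n] [DecidableEq n] [RCLike 𝕜]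

lemma map_norm_sq_mem_doublyStochastic {U : Matrix n n 𝕜} (hU : U ∈ unitary (Matrix n n 𝕜)) :
    U.map (‖·‖ ^ 2) ∈ doublyStochastic ℝ n := by
  refine mem_doublyStochastic_iff_sum.2
    ⟨fun _ _ => by simp only [map_apply]; positivity, fun i => ?_, fun j => ?_⟩
  · have h : (U * star U) i i = (1 : Matrix n n 𝕜) i i := by rw [Unitary.mul_star_self_of_mem hU]
    apply RCLike.ofReal_injective (K := 𝕜)
    simpa [mul_apply, star_eq_conjTranspose, RCLike.mul_conj] using h
  · have h : (star U * U) j j = (1 : Matrix n n 𝕜) j j := by rw [Unitary.star_mul_self_of_mem hU]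
    apply RCLike.ofReal_injective (K := 𝕜)
    simpa [mul_apply, star_eq_conjTranspose, RCLike.conj_mul] using h

lemma IsHermitian.re_diag_eq_mulVec_eigenvalues {A : Matrix n n 𝕜} (hA : A.IsHermitian) :
    (fun i => RCLike.re (A i i)) =
      (hA.eigenvectorUnitary : Matrix n n 𝕜).map (‖·‖ ^ 2) *ᵥ hA.eigenvalues := by
  ext i
  conv_lhs => rw [hA.spectral_theorem]
  rw [Unitary.conjStarAlgAut_apply, mul_apply]
  simp only [mul_diagonal, Function.comp_apply, star_apply, RCLike.star_def, map_sum, mulVec,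
    dotProduct, map_apply]
  refine sum_congr rfl fun j _ => ?_
  rw [mul_right_comm, RCLike.mul_conj, ← RCLike.ofReal_pow, ← RCLike.ofReal_mul, RCLike.ofReal_re]

lemma IsHermitian.trace_cfc {A : Matrix n n 𝕜} (hA : A.IsHermitian) (f : ℝ → ℝ) :
    (hA.cfc f).trace = ∑ i, (f (hA.eigenvalues i) : 𝕜) := by
  rw [IsHermitian.cfc, Unitary.conjStarAlgAut_apply, trace_mul_cycle,
    Unitary.coe_star_mul_self, one_mul, trace_diagonal]
  rfl

lemma sum_comp_eigenvalues_isHermitian_diagonal {M : Type*} [AddCommMonoid M] (d : n → ℝ)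
    (g : ℝ → M) : ∑ i, g ((isHermitian_diagonal d).eigenvalues i) = ∑ i, g (d i) := by
  have h := (isHermitian_diagonal d).roots_charpoly_eq_eigenvalues
  rw [charpoly_diagonal, Polynomial.roots_prod _ _
    (prod_ne_zero_iff.2 fun i _ => Polynomial.X_sub_C_ne_zero _)] at h
  have h_map : univ.val.map (isHermitian_diagonal d).eigenvalues = univ.val.map d := by
    simpa [Polynomial.roots_X_sub_C] using h.symm
  simpa only [Multiset.map_map, Function.comp_def, Finset.sum_map_val]
    using congrArg (fun s => (s.map g).sum) h_map

end Matrix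

section Jensen

variable {𝕜 β n : Type*} [Fintype n] [DecidableEq n]
  [Field 𝕜] [LinearOrder 𝕜] [IsStrictOrderedRing 𝕜]
  [AddCommGroup β] [PartialOrder β] [IsOrderedAddMonoid β] [Module 𝕜 β] [IsStrictOrderedModule 𝕜 β]

lemma ConvexOn.sum_map_mulVec_le {s : Set 𝕜} {f : 𝕜 → β} (hf : ConvexOn 𝕜 s f)
    {M : Matrix n n 𝕜} (hM : M ∈ doublyStochastic 𝕜 n) {x : n → 𝕜} (hx : ∀ i, x i ∈ s) :
    ∑ i, f ((M *ᵥ x) i) ≤ ∑ i, f (x i) :=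
  calc ∑ i, f ((M *ᵥ x) i) ≤ ∑ i, ∑ j, M i j • f (x j) := sum_le_sum fun i _ =>
        hf.map_sum_le (fun j _ => nonneg_of_mem_doublyStochastic hM)
          (sum_row_of_mem_doublyStochastic hM i) (fun j _ => hx j)
    _ = ∑ j, (∑ i, M i j) • f (x j) := by rw [sum_comm]; simp only [sum_smul]
    _ = ∑ j, f (x j) := by simp only [sum_col_of_mem_doublyStochastic hM, one_smul]

end Jensen

/-- Majorization trace inequality: for a Hermitian matrix `A` with all eigenvalues in the
closed interval `[α, β]` and a convex function `f` on `[α, β]`,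
`Tr(f(A)) ≥ Tr(f(A_Diag))`, where `A_Diag` is the diagonal part of `A`. -/
theorem stmt_3 {n : ℕ} (α β : ℝ) (A : Matrix (Fin n) (Fin n) ℝ) (hA : A.IsHermitian)
    (heig : ∀ i, hA.eigenvalues i ∈ Set.Icc α β)
    (f : ℝ → ℝ) (hf : ConvexOn ℝ (Set.Icc α β) f) :
    Matrix.trace ((Matrix.isHermitian_diagonal (fun i => A i i)).cfc f) ≤
      Matrix.trace (hA.cfc f) := by
  have h_diag : ∀ i, A i i =
      ((hA.eigenvectorUnitary : Matrix _ _ ℝ).map (‖·‖ ^ 2) *ᵥ hA.eigenvalues) i :=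
    congrFun hA.re_diag_eq_mulVec_eigenvalues
  simp only [IsHermitian.trace_cfc, RCLike.ofReal_real_eq_id, id,
    sum_comp_eigenvalues_isHermitian_diagonal, h_diag]
  exact hf.sum_map_mulVec_le (map_norm_sq_mem_doublyStochastic (SetLike.coe_mem _)) heig
end

section
/- Let Ω be a closed interval in ℝ, let A be an m×m Hermitian matrix all of whose eigenvalues lie in Ω, partitioned into k² blocks M_{ij} (1 ≤ i,j ≤ k) according to a partition of the index set into k consecutive groups, and let f : Ω → ℝ be a convex function. Then Tr(f(A)) ≥ Tr(f(M_{11} ⊕ M_{22} ⊕ ⋯ ⊕ M_{kk})), where ⊕ denotes the direct sum (block diagonal matrix formed from the diagonal blocks of A). -/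
/-!
Let `W` be the block-diagonal orthogonal matrix diagonalizing each diagonal block of `A`. Then
`Wᵀ D W` is diagonal, with the eigenvalues `μ` of the blocks as entries, and these are also the
diagonal entries of `Wᵀ A W`, since conjugation by `W` sees the diagonal blocks only. Writing
`A = U diag(λ) Uᵀ`, the diagonal of `Wᵀ A W` is `λ ᵥ* S` with `S` the entrywise square of the
orthogonal matrix `Uᵀ W`, which is doubly stochastic; Jensen's inequality then gives
`∑ f(μ) ≤ ∑ f(λ)` (Peierls' inequality), that is, `Tr f(D) ≤ Tr f(A)`.
-/

open Matrix

namespace Matrix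

section Diagonalization

variable {n : Type*} [Fintype n] [DecidableEq n] {B : Matrix n n ℝ}

theorem diagonal_comp_mul_eq_mul_diagonal_comp {R m : Type*} [CommRing R] [NoZeroDivisors R]
    [Fintype m] [DecidableEq m] {d : m → R} {e : n → R} {X : Matrix m n R}
    (hX : diagonal d * X = X * diagonal e) (g : R → R) :
    diagonal (g ∘ d) * X = X * diagonal (g ∘ e) := by
  ext p q
  have hpq := congrFun (congrFun hX p) q
  simp only [diagonal_mul, mul_diagonal] at hpq
  simp only [diagonal_mul, mul_diagonal, Function.comp_apply]
  rcases eq_or_ne (X p q) 0 with h | h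
  · simp [h]
  · rw [mul_comm (X p q)] at hpq
    rw [mul_right_cancel₀ h hpq, mul_comm]

namespace IsHermitian

variable (hB : B.IsHermitian)
include hB

theorem mul_eigenvectorUnitary :
    B * hB.eigenvectorUnitary = hB.eigenvectorUnitary * diagonal hB.eigenvalues := by
  have h := hB.spectral_theorem
  simp only [Unitary.conjStarAlgAut_apply, RCLike.ofReal_real_eq_id, Function.id_comp] at h
  calc B * hB.eigenvectorUnitary
      = hB.eigenvectorUnitary * diagonal hB.eigenvalues *
          star (hB.eigenvectorUnitary : Matrix n n ℝ) * hB.eigenvectorUnitary :=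
        congrArg (· * _) h
    _ = hB.eigenvectorUnitary * diagonal hB.eigenvalues := by simp [mul_assoc]

theorem cfc_eq_eigenvectorUnitary_conj (f : ℝ → ℝ) :
    hB.cfc f = hB.eigenvectorUnitary * diagonal (f ∘ hB.eigenvalues) *
      star (hB.eigenvectorUnitary : Matrix n n ℝ) := by
  simp [IsHermitian.cfc, Unitary.conjStarAlgAut_apply]

theorem star_eigenvectorUnitary_mul :
    star (hB.eigenvectorUnitary : Matrix n n ℝ) * B =
      diagonal hB.eigenvalues * star (hB.eigenvectorUnitary : Matrix n n ℝ) := by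
  calc star (hB.eigenvectorUnitary : Matrix n n ℝ) * B
      = star (hB.eigenvectorUnitary : Matrix n n ℝ) * (B * hB.eigenvectorUnitary) *
          star (hB.eigenvectorUnitary : Matrix n n ℝ) := by simp [mul_assoc]
    _ = diagonal hB.eigenvalues * star (hB.eigenvectorUnitary : Matrix n n ℝ) := by
        simp [hB.mul_eigenvectorUnitary, ← mul_assoc]

theorem cfc_mul_of_mul_eq_mul_diagonal {W : Matrix n n ℝ} {μ : n → ℝ}
    (hBW : B * W = W * diagonal μ) (f : ℝ → ℝ) :
    hB.cfc f * W = W * diagonal (f ∘ μ) := by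
  set U : Matrix n n ℝ := (hB.eigenvectorUnitary : Matrix n n ℝ)
  have hX : diagonal hB.eigenvalues * (star U * W) = (star U * W) * diagonal μ := by
    rw [← mul_assoc, ← hB.star_eigenvectorUnitary_mul, mul_assoc, hBW, mul_assoc]
  calc hB.cfc f * W = U * (diagonal (f ∘ hB.eigenvalues) * (star U * W)) := by
        rw [hB.cfc_eq_eigenvectorUnitary_conj]; simp only [U, mul_assoc]
    _ = U * ((star U * W) * diagonal (f ∘ μ)) := by
        rw [diagonal_comp_mul_eq_mul_diagonal_comp hX]
    _ = W * diagonal (f ∘ μ) := by simp [U, ← mul_assoc]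

theorem trace_cfc_of_mul_eq_mul_diagonal {W : Matrix n n ℝ} (hW : W ∈ unitaryGroup n ℝ)
    {μ : n → ℝ} (hBW : B * W = W * diagonal μ) (f : ℝ → ℝ) :
    (hB.cfc f).trace = ∑ p, f (μ p) := by
  have h : hB.cfc f = W * diagonal (f ∘ μ) * star W := by
    rw [← hB.cfc_mul_of_mul_eq_mul_diagonal hBW, mul_assoc, mem_unitaryGroup_iff.1 hW, mul_one]
  rw [h, trace_mul_cycle, mem_unitaryGroup_iff'.1 hW, one_mul, trace_diagonal]
  rfl

theorem trace_cfc_s4 (f : ℝ → ℝ) : (hB.cfc f).trace = ∑ p, f (hB.eigenvalues p) :=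
  hB.trace_cfc_of_mul_eq_mul_diagonal hB.eigenvectorUnitary.2 hB.mul_eigenvectorUnitary f

end IsHermitian
end Diagonalization

theorem diag_transpose_mul_diagonal_mul {m n R : Type*} [Fintype m] [DecidableEq m]
    [CommSemiring R] (V : Matrix m n R) (d : m → R) (q : n) :
    (Vᵀ * diagonal d * V) q q = (d ᵥ* V.map (· ^ 2)) q := by
  rw [mul_apply]
  simp only [mul_diagonal, transpose_apply, vecMul, dotProduct, map_apply]
  exact Finset.sum_congr rfl fun p _ => by ring

theorem map_sq_mem_doublyStochastic {n : Type*} [Fintype n] [DecidableEq n] {V : Matrix n n ℝ}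
    (hV : V ∈ orthogonalGroup n ℝ) :
    V.map (· ^ 2) ∈ doublyStochastic ℝ n := by
  refine mem_doublyStochastic_iff_sum.2 ⟨fun _ _ => sq_nonneg _, fun p => ?_, fun q => ?_⟩
  · simpa [mul_apply, sq] using congrFun (congrFun (mem_unitaryGroup_iff.1 hV) p) p
  · simpa [mul_apply, sq] using congrFun (congrFun (mem_unitaryGroup_iff'.1 hV) q) q

end Matrix

theorem ConvexOn.sum_comp_vecMul_le {n : Type*} [Fintype n] [DecidableEq n] {s : Set ℝ}
    {f : ℝ → ℝ} (hf : ConvexOn ℝ s f) {S : Matrix n n ℝ} (hS : S ∈ doublyStochastic ℝ n)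
    {x : n → ℝ} (hx : ∀ p, x p ∈ s) :
    ∑ q, f ((x ᵥ* S) q) ≤ ∑ p, f (x p) := by
  obtain ⟨hS_nonneg, hS_row, hS_col⟩ := mem_doublyStochastic_iff_sum.1 hS
  calc ∑ q, f ((x ᵥ* S) q)
      ≤ ∑ q, ∑ p, S p q * f (x p) := Finset.sum_le_sum fun q _ => by
        simpa [vecMul, dotProduct, mul_comm] using
          hf.map_sum_le (fun p _ => hS_nonneg p q) (hS_col q) (fun p _ => hx p)
    _ = ∑ p, f (x p) := by
        rw [Finset.sum_comm]
        simp [← Finset.sum_mul, hS_row]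

theorem Matrix.IsHermitian.sum_comp_diag_conj_le_trace_cfc {n : Type*} [Fintype n]
    [DecidableEq n] {B : Matrix n n ℝ} (hB : B.IsHermitian) {s : Set ℝ} {f : ℝ → ℝ}
    (hf : ConvexOn ℝ s f) (heig : ∀ p, hB.eigenvalues p ∈ s) {W : Matrix n n ℝ}
    (hW : W ∈ unitaryGroup n ℝ) :
    ∑ q, f ((star W * B * W) q q) ≤ (hB.cfc f).trace := by
  have hU := hB.eigenvectorUnitary.2
  have hBU := hB.mul_eigenvectorUnitary
  generalize (hB.eigenvectorUnitary : Matrix n n ℝ) = U at hU hBU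
  set V := star U * W
  have hV : V ∈ orthogonalGroup n ℝ := mul_mem (Unitary.star_mem hU) hW
  have hconj : star W * B * W = Vᵀ * diagonal hB.eigenvalues * V := by
    calc star W * B * W = star W * (B * U) * (star U * W) := by
          simp only [mul_assoc]; rw [← mul_assoc U, mem_unitaryGroup_iff.1 hU, one_mul]
      _ = Vᵀ * diagonal hB.eigenvalues * V := by
        rw [hBU, ← conjTranspose_eq_transpose_of_trivial, ← star_eq_conjTranspose]
        simp only [V, star_mul, star_star, mul_assoc]
  rw [hB.trace_cfc_s4]
  simpa only [hconj, diag_transpose_mul_diagonal_mul] using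
    hf.sum_comp_vecMul_le (map_sq_mem_doublyStochastic hV) heig

namespace Matrix

theorem IsHermitian.blockDiag' {ι α : Type*} {m : ι → Type*} [Star α]
    {A : Matrix (Σ i, m i) (Σ i, m i) α} (hA : A.IsHermitian) (i : ι) :
    (A.blockDiag' i).IsHermitian := by
  rw [IsHermitian, ← blockDiag'_conjTranspose, hA.eq]

section BlockDiagonal

variable {ι : Type*} [Fintype ι] [DecidableEq ι] {m : ι → Type*} [∀ i, Fintype (m i)]

theorem blockDiag'_conj_blockDiagonal' {α : Type*} [CommRing α] [StarRing α]
    (U : ∀ i, Matrix (m i) (m i) α) (A : Matrix (Σ i, m i) (Σ i, m i) α) :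
    blockDiag' (star (blockDiagonal' U) * A * blockDiagonal' U) =
      fun i => star (U i) * blockDiag' A i * U i := by
  ext i a b
  simp [star_eq_conjTranspose, blockDiagonal'_conjTranspose, blockDiag'_apply, mul_apply,
    blockDiagonal'_apply, Fintype.sum_sigma]

theorem blockDiagonal'_mem_unitaryGroup [∀ i, DecidableEq (m i)] {α : Type*} [CommRing α]
    [StarRing α] {U : ∀ i, Matrix (m i) (m i) α} (hU : ∀ i, U i ∈ unitaryGroup (m i) α) :
    blockDiagonal' U ∈ unitaryGroup (Σ i, m i) α := by
  rw [mem_unitaryGroup_iff, star_eq_conjTranspose, blockDiagonal'_conjTranspose,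
    ← blockDiagonal'_mul]
  convert blockDiagonal'_one with i
  exact mem_unitaryGroup_iff.1 (hU i)

theorem blockDiagonal'_mul_blockDiagonal'_eigenvectorUnitary [∀ i, DecidableEq (m i)]
    {M : ∀ i, Matrix (m i) (m i) ℝ} (hM : ∀ i, (M i).IsHermitian) :
    blockDiagonal' M * blockDiagonal' (fun i => ((hM i).eigenvectorUnitary : Matrix _ _ ℝ)) =
      blockDiagonal' (fun i => ((hM i).eigenvectorUnitary : Matrix _ _ ℝ)) *
        diagonal fun p => (hM p.1).eigenvalues p.2 := by
  rw [← blockDiagonal'_mul, ← blockDiagonal'_diagonal fun i => (hM i).eigenvalues,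
    ← blockDiagonal'_mul]
  exact congrArg _ (funext fun i => (hM i).mul_eigenvectorUnitary)

end BlockDiagonal

end Matrix

theorem stmt_4_general {k : ℕ} (m : Fin k → ℕ)
    (α β : ℝ) (A : Matrix (Σ i : Fin k, Fin (m i)) (Σ i : Fin k, Fin (m i)) ℝ)
    (hA : A.IsHermitian)
    (heig : ∀ p, hA.eigenvalues p ∈ Set.Icc α β)
    (f : ℝ → ℝ) (hf : ConvexOn ℝ (Set.Icc α β) f)
    (D : Matrix (Σ i : Fin k, Fin (m i)) (Σ i : Fin k, Fin (m i)) ℝ)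
    (hDdef : ∀ p q : Σ i : Fin k, Fin (m i), D p q = if p.1 = q.1 then A p q else 0)
    (hD : D.IsHermitian) :
    Matrix.trace (hD.cfc f) ≤ Matrix.trace (hA.cfc f) := by
  have hM := hA.blockDiag'
  have hDM : D = blockDiagonal' A.blockDiag' := by
    ext ⟨i, a⟩ ⟨j, b⟩
    rw [hDdef, blockDiagonal'_apply]
    by_cases h : i = j
    · subst h; simp [blockDiag'_apply]
    · simp [h]
  set W := blockDiagonal' fun i => ((hM i).eigenvectorUnitary : Matrix (Fin (m i)) (Fin (m i)) ℝ)
  set μ : (Σ i : Fin k, Fin (m i)) → ℝ := fun p => (hM p.1).eigenvalues p.2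
  have hW : W ∈ unitaryGroup _ ℝ :=
    blockDiagonal'_mem_unitaryGroup fun i => (hM i).eigenvectorUnitary.2
  have hDW : D * W = W * diagonal μ := hDM ▸ blockDiagonal'_mul_blockDiagonal'_eigenvectorUnitary hM
  have hdiag (p : Σ i : Fin k, Fin (m i)) : (star W * A * W) p p = μ p := by
    have hWDW : star W * D * W = diagonal μ := by
      rw [mul_assoc, hDW, ← mul_assoc, mem_unitaryGroup_iff'.1 hW, one_mul]
    calc (star W * A * W) p p = blockDiag' (star W * A * W) p.1 p.2 p.2 := rfl
      _ = blockDiag' (star W * D * W) p.1 p.2 p.2 := by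
        rw [blockDiag'_conj_blockDiagonal', blockDiag'_conj_blockDiagonal', hDM,
          blockDiag'_blockDiagonal']
      _ = μ p := by simp [hWDW, blockDiag'_apply]
  rw [hD.trace_cfc_of_mul_eq_mul_diagonal hW hDW f]
  simpa only [hdiag] using hA.sum_comp_diag_conj_le_trace_cfc hf heig hW

/-- Block version of the majorization trace inequality: for a Hermitian matrix `A`
(indexed by pairs `(i,j)`, `i : Fin k`, `j : Fin (m i)`) with all eigenvalues in the closed
interval `[α, β]`, and a convex function `f` on `[α, β]`,
`Tr(f(A)) ≥ Tr(f(M₁₁ ⊕ ⋯ ⊕ M_kk))`, where the direct sum of the diagonal blocks of `A`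
is the matrix `D` with `D (i,j) (i',j') = A (i,j) (i',j')` if `i = i'` and `0` otherwise
(which is again Hermitian, as witnessed by `hD`). -/
theorem stmt_4 {k : ℕ} (hk : 1 ≤ k) (m : Fin k → ℕ)
    (α β : ℝ) (A : Matrix (Σ i : Fin k, Fin (m i)) (Σ i : Fin k, Fin (m i)) ℝ)
    (hA : A.IsHermitian)
    (heig : ∀ p, hA.eigenvalues p ∈ Set.Icc α β)
    (f : ℝ → ℝ) (hf : ConvexOn ℝ (Set.Icc α β) f)
    (D : Matrix (Σ i : Fin k, Fin (m i)) (Σ i : Fin k, Fin (m i)) ℝ)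
    (hDdef : ∀ p q : Σ i : Fin k, Fin (m i), D p q = if p.1 = q.1 then A p q else 0)
    (hD : D.IsHermitian) :
    Matrix.trace (hD.cfc f) ≤ Matrix.trace (hA.cfc f) :=
  stmt_4_general m α β A hA heig f hf D hDdef hD
end

section
/- Let k ≥ 1, let η > 0, and let d₁, …, d_k be nonnegative real numbers. Let Γ be the k×k matrix whose diagonal entries equal (η + k − 1)/(η(η + k)) and whose off-diagonal entries equal −1/(η(η + k)). Set φ_i = d_i + 1/η, Φ₋₁ = ∑_{i=1}^{k} φ_i⁻¹ and Φ₋₂ = ∑_{i=1}^{k} φ_i⁻². Then the matrix Diag(d₁, …, d_k) + Γ is invertible and Tr[(Diag(d₁, …, d_k) + Γ)⁻¹] = Φ₋₁ + Φ₋₂ / (η(η + k) − Φ₋₁). -/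
/-!
Writing `φᵢ = dᵢ + 1/η` and `s = η(η + k)`, the matrix is `Diag(φ) - s⁻¹ 𝟙𝟙ᵀ`, a rank-one
perturbation of a positive diagonal matrix. By Sherman–Morrison its inverse is
`Diag(φ⁻¹) + φ⁻¹(φ⁻¹)ᵀ / (s - Φ₋₁)`, whose trace is `Φ₋₁ + Φ₋₂ / (s - Φ₋₁)`. The denominator is
nonzero because `φᵢ⁻¹ ≤ η` gives `Φ₋₁ ≤ kη < s`.
-/

open Matrix Finset

namespace Matrix

variable {ι K : Type*} [Fintype ι] [DecidableEq ι] [Field K]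

theorem diagonal_sub_const_mul_eq_one {φ : ι → K} (hφ : ∀ i, φ i ≠ 0) {s : K}
    (hs : s ≠ 0) (hΦ : s - ∑ i, (φ i)⁻¹ ≠ 0) :
    (diagonal φ - of fun _ _ => s⁻¹) *
      (diagonal (fun i => (φ i)⁻¹) + of fun i j => (φ i)⁻¹ * (φ j)⁻¹ / (s - ∑ l, (φ l)⁻¹)) =
      1 := by
  set t := s - ∑ l, (φ l)⁻¹
  have hsum : ∑ l, (φ l)⁻¹ = s - t := by simp only [t]; ring
  ext i j
  rw [sub_mul, mul_add, Matrix.sub_apply, Matrix.add_apply, diagonal_mul_diagonal, diagonal_mul,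
    mul_apply]
  simp only [of_apply, Matrix.add_apply, diagonal_apply, one_apply, mul_add, mul_ite, mul_zero,
    sum_add_distrib, sum_ite_eq', mem_univ, if_true, ← mul_sum, ← sum_div, ← sum_mul, hsum]
  split_ifs with hij
  · subst hij
    field_simp [hφ i]
    ring
  · field_simp [hφ i, hφ j]
    ring

theorem isUnit_diagonal_sub_const_and_inv_eq {φ : ι → K} (hφ : ∀ i, φ i ≠ 0) {s : K}
    (hs : s ≠ 0) (hΦ : s - ∑ i, (φ i)⁻¹ ≠ 0) :
    IsUnit (diagonal φ - of fun _ _ => s⁻¹) ∧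
      (diagonal φ - of fun _ _ => s⁻¹)⁻¹ =
        diagonal (fun i => (φ i)⁻¹) + of fun i j => (φ i)⁻¹ * (φ j)⁻¹ / (s - ∑ l, (φ l)⁻¹) :=
  have h := diagonal_sub_const_mul_eq_one hφ hs hΦ
  ⟨(isUnit_iff_isUnit_det _).2 (isUnit_det_of_right_inverse h), inv_eq_right_inv h⟩

theorem trace_diagonal_add_of_mul_div (u : ι → K) (t : K) :
    trace (diagonal u + of fun i j => u i * u j / t) = ∑ i, u i + (∑ i, u i ^ 2) / t := by
  rw [trace_add, trace_diagonal]
  simp only [trace, diag_apply, of_apply, sum_div, sq]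

end Matrix

theorem inv_add_one_div_le {d η : ℝ} (hd : 0 ≤ d) (hη : 0 < η) : (d + 1 / η)⁻¹ ≤ η := by
  rw [inv_le_comm₀ (by positivity) hη, one_div]
  linarith

theorem eq_diagonal_sub_const {k : ℕ} {η : ℝ} (hη : 0 < η) (d : Fin k → ℝ) :
    (diagonal d + of fun i j : Fin k =>
        if i = j then (η + k - 1) / (η * (η + k)) else -1 / (η * (η + k))) =
      diagonal (fun i => d i + 1 / η) - of fun _ _ => (η * (η + k))⁻¹ := by
  ext i j
  simp only [Matrix.add_apply, Matrix.sub_apply, diagonal_apply, of_apply]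
  split_ifs
  · field_simp
    ring
  · ring

theorem stmt_7_general {k : ℕ} (η : ℝ) (hη : 0 < η)
    (d : Fin k → ℝ) (hd : ∀ i, 0 ≤ d i) :
    IsUnit (Matrix.diagonal d +
        Matrix.of (fun i j : Fin k =>
          if i = j then (η + k - 1) / (η * (η + k)) else -1 / (η * (η + k)))) ∧
      Matrix.trace ((Matrix.diagonal d +
        Matrix.of (fun i j : Fin k =>
          if i = j then (η + k - 1) / (η * (η + k)) else -1 / (η * (η + k))))⁻¹) =
      (∑ i, (d i + 1/η)⁻¹) +
        (∑ i, (d i + 1/η)⁻¹ ^ 2) / (η * (η + k) - ∑ i, (d i + 1/η)⁻¹) := by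
  have hφ : ∀ i, d i + 1 / η ≠ 0 := fun i => by have := hd i; positivity
  have hs : η * (η + k) ≠ 0 := by positivity
  have hΦ : ∑ i, (d i + 1 / η)⁻¹ < η * (η + k) :=
    calc ∑ i, (d i + 1 / η)⁻¹ ≤ ∑ _i : Fin k, η :=
          sum_le_sum fun i _ => inv_add_one_div_le (hd i) hη
      _ = k * η := by simp
      _ < η * (η + k) := by nlinarith
  obtain ⟨hunit, hinv⟩ := isUnit_diagonal_sub_const_and_inv_eq hφ hs (sub_pos.2 hΦ).ne'
  rw [eq_diagonal_sub_const hη, hinv, trace_diagonal_add_of_mul_div]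
  exact ⟨hunit, rfl⟩

/-- Trace of `(Diag(d) + Γ)⁻¹` where `Γ` has diagonal entries `(η+k−1)/(η(η+k))` and
off-diagonal entries `−1/(η(η+k))`: the matrix `Diag(d) + Γ` is invertible and, with
`φᵢ = dᵢ + 1/η`, `Φ₋₁ = ∑ φᵢ⁻¹` and `Φ₋₂ = ∑ φᵢ⁻²`, its inverse has trace
`Φ₋₁ + Φ₋₂ / (η(η+k) − Φ₋₁)`. -/
theorem stmt_7 {k : ℕ} (hk : 1 ≤ k) (η : ℝ) (hη : 0 < η)
    (d : Fin k → ℝ) (hd : ∀ i, 0 ≤ d i) :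
    IsUnit (Matrix.diagonal d +
        Matrix.of (fun i j : Fin k =>
          if i = j then (η + k - 1) / (η * (η + k)) else -1 / (η * (η + k)))) ∧
      Matrix.trace ((Matrix.diagonal d +
        Matrix.of (fun i j : Fin k =>
          if i = j then (η + k - 1) / (η * (η + k)) else -1 / (η * (η + k))))⁻¹) =
      (∑ i, (d i + 1/η)⁻¹) +
        (∑ i, (d i + 1/η)⁻¹ ^ 2) / (η * (η + k) - ∑ i, (d i + 1/η)⁻¹) :=
  stmt_7_general η hη d hd
end

section
/- Let k ≥ 1, let m₁, …, m_k and n be positive integers, let N > 0 and η ≥ 0 be real numbers, and let σ₁, …, σ_k > 0. For each i let Q_i be a real m_i × n matrix each of whose rows has squared Euclidean norm N. Let Q_a be the (∑m_i) × n matrix obtained by stacking Q₁, …, Q_k on top of each other, let Q_b = Q₁ ⊕ Q₂ ⊕ ⋯ ⊕ Q_k be the (∑m_i) × kn block diagonal matrix with blocks Q_i, and let C_Z = ⊕_{i=1}^{k} σ_i² I_{m_i}. Then Tr[(Q_a Q_aᵀ + η Q_b Q_bᵀ + C_Z)⁻¹ Q_a Q_aᵀ] ≤ ∑_{i=1}^{k}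 N m_i / ((1 + η) N + σ_i²). -/
open Matrix

/-- The stacked matrix `Q_a` whose rows are the rows of `Q₁, …, Q_k`. -/
def stackedMatrix {k n : ℕ} {m : Fin k → ℕ}
    (Q : ∀ i, Matrix (Fin (m i)) (Fin n) ℝ) :
    Matrix (Σ i : Fin k, Fin (m i)) (Fin n) ℝ :=
  Matrix.of fun p l => Q p.1 p.2 l

/-!
Diagonalise each Gram block, `W_i Q_i Q_iᵀ W_iᵀ = diag(λ_i)` with `W_i` orthogonal. Conjugating
by `⊕ W_i` preserves the trace and replaces `Q_i` by `W_i Q_i`, whose rows are orthogonal with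
squared norms `λ_ij`, where `∑_j λ_ij = Tr[Q_i Q_iᵀ] = N m_i`. Then `η Q_b Q_bᵀ + C_Z` becomes the
diagonal matrix `D = diag(η λ_ij + σ_i²)`, and with `M = A + D`,
`Tr[M⁻¹ A] = Tr[I] - ∑ (M⁻¹)_pp D_pp ≤ ∑ (1 - D_pp / M_pp) = ∑ λ_ij / ((1 + η) λ_ij + σ_i²)`
because `M_pp (M⁻¹)_pp ≥ 1` by Cauchy–Schwarz. Finally `x ↦ x / ((1 + η) x + σ_i²)` is concave,
so each block sum is at most `m_i` times its value at the mean `N`.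
-/

theorem Matrix.PosDef.one_le_mul_inv_apply_self {ι : Type*} [Fintype ι] [DecidableEq ι]
    {S : Matrix ι ι ℝ} (hS : S.PosDef) (p : ι) : 1 ≤ S p p * S⁻¹ p p := by
  -- Cauchy–Schwarz for `⟪x, y⟫ = xᵀ S y` at `x = e_p`, `y = S⁻¹ e_p`.
  let := S.toSeminormedAddCommGroup hS.posSemidef
  let := S.toInnerProductSpace hS.posSemidef
  have hSS : S * S⁻¹ = 1 := S.mul_nonsing_inv (S.isUnit_iff_isUnit_det.mp hS.isUnit)
  have h := real_inner_mul_inner_self_le (Pi.single p 1 : ι → ℝ) (S⁻¹ *ᵥ Pi.single p 1)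
  change ((S *ᵥ _) ⬝ᵥ _) * ((S *ᵥ _) ⬝ᵥ _) ≤ ((S *ᵥ _) ⬝ᵥ _) * ((S *ᵥ _) ⬝ᵥ _) at h
  simp only [mulVec_mulVec, hSS, one_mulVec, star_trivial] at h
  simpa [mulVec_single_one, dotProduct_single, Pi.single_apply] using h

theorem Matrix.trace_inv_add_diagonal_mul_le {ι : Type*} [Fintype ι] [DecidableEq ι]
    {A : Matrix ι ι ℝ} {d : ι → ℝ} (hM : (A + diagonal d).PosDef) (hd : 0 ≤ d) :
    trace ((A + diagonal d)⁻¹ * A) ≤ ∑ p, A p p / (A p p + d p) := by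
  set M := A + diagonal d
  have hMM : M⁻¹ * M = 1 := M.nonsing_inv_mul (M.isUnit_iff_isUnit_det.mp hM.isUnit)
  have htrace : trace (M⁻¹ * A) = ∑ p, (1 - M⁻¹ p p * d p) := by
    rw [show A = M - diagonal d by simp [M], Matrix.mul_sub, hMM, trace_sub, trace_one,
      Finset.sum_sub_distrib]
    simp [trace, mul_diagonal]
  rw [htrace]
  gcongr with p
  have hMp : M p p = A p p + d p := by simp [M]
  have hpos : 0 < M p p := hM.diag_pos
  have h := hM.one_le_mul_inv_apply_self p
  rw [← hMp, le_div_iff₀ hpos]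
  nlinarith [mul_le_mul_of_nonneg_left h (hd p)]

theorem Matrix.trace_inv_mul_conj {ι R : Type*} [Fintype ι] [DecidableEq ι] [Field R]
    {U V : Matrix ι ι R} (hUV : U * V = 1) (M A : Matrix ι ι R) :
    trace ((U * M * V)⁻¹ * (U * A * V)) = trace (M⁻¹ * A) := by
  have hVU : V * U = 1 := mul_eq_one_comm.mp hUV
  rw [mul_inv_rev, mul_inv_rev, inv_eq_left_inv hUV, inv_eq_left_inv hVU]
  rw [show U * (M⁻¹ * V) * (U * A * V) = U * (M⁻¹ * A) * V by
    simp only [Matrix.mul_assoc]; rw [← Matrix.mul_assoc V U, hVU, Matrix.one_mul],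
    trace_mul_cycle, hVU, Matrix.one_mul]

theorem sum_div_mul_add_le {ι : Type*} (s : Finset ι) {x : ι → ℝ} {a b c : ℝ}
    (ha : 0 ≤ a) (hb : 0 < b) (hc : 0 ≤ c) (hx : ∀ j ∈ s, 0 ≤ x j)
    (hsum : ∑ j ∈ s, x j = c * s.card) :
    ∑ j ∈ s, x j / (a * x j + b) ≤ c * s.card / (a * c + b) := by
  have hc' : 0 < a * c + b := by positivity
  have tangent : ∀ j ∈ s,
      x j / (a * x j + b) ≤ c / (a * c + b) + b / (a * c + b) ^ 2 * (x j - c) := by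
    intro j hj
    have hxj : 0 < a * x j + b := by have := hx j hj; positivity
    have : c / (a * c + b) + b / (a * c + b) ^ 2 * (x j - c) - x j / (a * x j + b)
        = a * b * (x j - c) ^ 2 / ((a * c + b) ^ 2 * (a * x j + b)) := by
      field_simp
      ring
    have : 0 ≤ a * b * (x j - c) ^ 2 / ((a * c + b) ^ 2 * (a * x j + b)) := by positivity
    linarith
  calc ∑ j ∈ s, x j / (a * x j + b)
        ≤ ∑ j ∈ s, (c / (a * c + b) + b / (a * c + b) ^ 2 * (x j - c)) := Finset.sum_le_sum tangent
    _ = c * s.card / (a * c + b) := by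
        rw [Finset.sum_add_distrib, ← Finset.mul_sum, Finset.sum_sub_distrib, hsum]
        simp only [Finset.sum_const, nsmul_eq_mul]
        field_simp
        ring

theorem Matrix.IsHermitian.exists_mul_mul_transpose_eq_diagonal {ι : Type*} [Fintype ι]
    [DecidableEq ι] {G : Matrix ι ι ℝ} (hG : G.IsHermitian) :
    ∃ W : Matrix ι ι ℝ, W * Wᵀ = 1 ∧ W * G * Wᵀ = diagonal hG.eigenvalues := by
  refine ⟨star (hG.eigenvectorUnitary : Matrix ι ι ℝ), ?_, ?_⟩
  · have := Unitary.coe_star_mul_self hG.eigenvectorUnitary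
    simpa [star_eq_conjTranspose] using this
  · have h := hG.conjStarAlgAut_star_eigenvectorUnitary
    simpa [Unitary.conjStarAlgAut_star_apply, star_eq_conjTranspose] using h

section
variable {k n : ℕ} {m : Fin k → ℕ}

noncomputable def covMatrix (η : ℝ) (σ : Fin k → ℝ) (Q : ∀ i, Matrix (Fin (m i)) (Fin n) ℝ) :
    Matrix (Σ i : Fin k, Fin (m i)) (Σ i : Fin k, Fin (m i)) ℝ :=
  stackedMatrix Q * (stackedMatrix Q)ᵀ + η • (blockDiagonal' Q * (blockDiagonal' Q)ᵀ) +
    diagonal fun p => σ p.1 ^ 2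

theorem blockDiagonal'_mul_stackedMatrix (W : ∀ i, Matrix (Fin (m i)) (Fin (m i)) ℝ)
    (Q : ∀ i, Matrix (Fin (m i)) (Fin n) ℝ) :
    blockDiagonal' W * stackedMatrix Q = stackedMatrix fun i => W i * Q i := by
  ext ⟨i, j⟩ l
  simp only [mul_apply, stackedMatrix, of_apply, ← Finset.univ_sigma_univ, Finset.sum_sigma]
  rw [Fintype.sum_eq_single i fun i' hi' => Finset.sum_eq_zero fun j' _ => by
    rw [blockDiagonal'_apply_ne W j j' (Ne.symm hi'), zero_mul]]
  simp [blockDiagonal'_apply_eq]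

theorem stackedMatrix_mul_transpose_apply (Q R : ∀ i, Matrix (Fin (m i)) (Fin n) ℝ)
    (p q : Σ i : Fin k, Fin (m i)) :
    (stackedMatrix Q * (stackedMatrix R)ᵀ) p q = (Q p.1 * (R q.1)ᵀ) p.2 q.2 := rfl

theorem blockDiagonal'_mul_diagonal_mul_transpose (W : ∀ i, Matrix (Fin (m i)) (Fin (m i)) ℝ)
    (hW : ∀ i, W i * (W i)ᵀ = 1) (c : Fin k → ℝ) :
    blockDiagonal' W * diagonal (fun p => c p.1) * (blockDiagonal' W)ᵀ =
      diagonal fun p => c p.1 := by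
  have hc : diagonal (fun p : Σ i, Fin (m i) => c p.1) = blockDiagonal' fun i => c i • 1 := by
    simp only [smul_one_eq_diagonal, blockDiagonal'_diagonal]
  rw [hc, blockDiagonal'_transpose, ← blockDiagonal'_mul, ← blockDiagonal'_mul]
  simp [hW]

theorem covMatrix_conj (η : ℝ) (σ : Fin k → ℝ) (Q : ∀ i, Matrix (Fin (m i)) (Fin n) ℝ)
    {W : ∀ i, Matrix (Fin (m i)) (Fin (m i)) ℝ} (hW : ∀ i, W i * (W i)ᵀ = 1) :
    blockDiagonal' W * covMatrix η σ Q * (blockDiagonal' W)ᵀ =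
      covMatrix η σ fun i => W i * Q i := by
  have hgram : ∀ {o : Type} [Fintype o] (X : Matrix (Σ i, Fin (m i)) o ℝ),
      blockDiagonal' W * (X * Xᵀ) * (blockDiagonal' W)ᵀ =
        (blockDiagonal' W * X) * (blockDiagonal' W * X)ᵀ := by
    intro o _ X; simp only [transpose_mul, Matrix.mul_assoc]
  simp only [covMatrix, Matrix.mul_add, Matrix.add_mul, Matrix.mul_smul, Matrix.smul_mul, hgram,
    blockDiagonal'_mul_stackedMatrix, ← blockDiagonal'_mul,
    blockDiagonal'_mul_diagonal_mul_transpose W hW fun i => σ i ^ 2]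

theorem covMatrix_posDef {η : ℝ} (hη : 0 ≤ η) {σ : Fin k → ℝ} (hσ : ∀ i, 0 < σ i)
    (Q : ∀ i, Matrix (Fin (m i)) (Fin n) ℝ) : (covMatrix η σ Q).PosDef := by
  have hgram : ∀ {ι} [Fintype ι] (X : Matrix (Σ i, Fin (m i)) ι ℝ), (X * Xᵀ).PosSemidef :=
    fun X => by simpa using posSemidef_self_mul_conjTranspose X
  refine PosDef.posSemidef_add ((hgram _).add ((hgram _).smul hη)) (PosDef.diagonal fun p => ?_)
  have := hσ p.1
  positivity

theorem covMatrix_eq_of_mul_transpose_eq_diagonal (η : ℝ) (σ : Fin k → ℝ)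
    {R : ∀ i, Matrix (Fin (m i)) (Fin n) ℝ} {ρ : ∀ i, Fin (m i) → ℝ}
    (hR : ∀ i, R i * (R i)ᵀ = diagonal (ρ i)) :
    covMatrix η σ R = stackedMatrix R * (stackedMatrix R)ᵀ +
      diagonal fun p => η * ρ p.1 p.2 + σ p.1 ^ 2 := by
  rw [covMatrix, blockDiagonal'_transpose, ← blockDiagonal'_mul]
  simp only [hR, blockDiagonal'_diagonal, add_assoc, ← diagonal_smul, diagonal_add]
  rfl

theorem trace_covMatrix_inv_mul_le_of_mul_transpose_eq_diagonal {η : ℝ} (hη : 0 ≤ η)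
    {σ : Fin k → ℝ} (hσ : ∀ i, 0 < σ i) {R : ∀ i, Matrix (Fin (m i)) (Fin n) ℝ}
    {ρ : ∀ i, Fin (m i) → ℝ} (hR : ∀ i, R i * (R i)ᵀ = diagonal (ρ i)) :
    trace ((covMatrix η σ R)⁻¹ * (stackedMatrix R * (stackedMatrix R)ᵀ)) ≤
      ∑ p : Σ i, Fin (m i), ρ p.1 p.2 / ((1 + η) * ρ p.1 p.2 + σ p.1 ^ 2) := by
  have hρ : ∀ p, (stackedMatrix R * (stackedMatrix R)ᵀ) p p = ρ p.1 p.2 := fun p => by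
    rw [stackedMatrix_mul_transpose_apply, hR, diagonal_apply_eq]
  have hρ_nonneg : ∀ i j, 0 ≤ ρ i j := fun i j => by
    simpa [hR] using (posSemidef_self_mul_conjTranspose (R i)).diag_nonneg (i := j)
  have hd : 0 ≤ fun p : Σ i, Fin (m i) => η * ρ p.1 p.2 + σ p.1 ^ 2 := fun p => by
    have := hρ_nonneg p.1 p.2
    positivity
  have hM := covMatrix_posDef hη hσ R
  rw [covMatrix_eq_of_mul_transpose_eq_diagonal η σ hR] at hM ⊢
  refine (trace_inv_add_diagonal_mul_le hM hd).trans_eq (Finset.sum_congr rfl fun p _ => ?_)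
  rw [hρ]
  ring_nf

end

theorem stmt_8_general {k n : ℕ} (m : Fin k → ℕ)
    (N η : ℝ) (hN : 0 < N) (hη : 0 ≤ η)
    (σ : Fin k → ℝ) (hσ : ∀ i, 0 < σ i)
    (Q : ∀ i, Matrix (Fin (m i)) (Fin n) ℝ)
    (hrows : ∀ i (j : Fin (m i)), ∑ l, (Q i j l) ^ 2 = N) :
    Matrix.trace
        ((stackedMatrix Q * (stackedMatrix Q)ᵀ +
            η • (Matrix.blockDiagonal' Q * (Matrix.blockDiagonal' Q)ᵀ) +
            Matrix.diagonal (fun p : Σ i : Fin k, Fin (m i) => σ p.1 ^ 2))⁻¹ *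
          (stackedMatrix Q * (stackedMatrix Q)ᵀ)) ≤
      ∑ i, N * (m i : ℝ) / ((1 + η) * N + σ i ^ 2) := by
  have hG : ∀ i, (Q i * (Q i)ᵀ).PosSemidef := fun i => by
    simpa using posSemidef_self_mul_conjTranspose (Q i)
  choose W hW hWG using fun i => (hG i).isHermitian.exists_mul_mul_transpose_eq_diagonal
  set ρ := fun i => (hG i).isHermitian.eigenvalues
  have hR : ∀ i, (W i * Q i) * (W i * Q i)ᵀ = diagonal (ρ i) := fun i => by
    rw [← hWG i, transpose_mul, Matrix.mul_assoc, Matrix.mul_assoc, Matrix.mul_assoc]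
  have hρ_sum : ∀ i, ∑ j, ρ i j = N * m i := fun i => by
    rw [← trace_diagonal, ← hWG i, trace_mul_cycle, mul_eq_one_comm.mp (hW i), Matrix.one_mul]
    simp [trace, mul_apply, ← sq, hrows, mul_comm]
  have hU : blockDiagonal' W * (blockDiagonal' W)ᵀ = 1 := by
    rw [blockDiagonal'_transpose, ← blockDiagonal'_mul]
    simp only [hW]
    exact blockDiagonal'_one
  calc trace ((covMatrix η σ Q)⁻¹ * (stackedMatrix Q * (stackedMatrix Q)ᵀ))
      = trace ((covMatrix η σ fun i => W i * Q i)⁻¹ *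
          ((stackedMatrix fun i => W i * Q i) * (stackedMatrix fun i => W i * Q i)ᵀ)) := by
        rw [← covMatrix_conj η σ Q hW, ← blockDiagonal'_mul_stackedMatrix, transpose_mul,
          ← trace_inv_mul_conj hU]
        simp only [Matrix.mul_assoc]
    _ ≤ ∑ p : Σ i, Fin (m i), ρ p.1 p.2 / ((1 + η) * ρ p.1 p.2 + σ p.1 ^ 2) :=
        trace_covMatrix_inv_mul_le_of_mul_transpose_eq_diagonal hη hσ hR
    _ = ∑ i, ∑ j, ρ i j / ((1 + η) * ρ i j + σ i ^ 2) := Fintype.sum_sigma _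
    _ ≤ ∑ i, N * (m i : ℝ) / ((1 + η) * N + σ i ^ 2) := Finset.sum_le_sum fun i _ => by
        simpa using sum_div_mul_add_le Finset.univ (by linarith) (pow_pos (hσ i) 2) hN.le
          (fun j _ => (hG i).eigenvalues_nonneg j) (by simpa using hρ_sum i)

/-- Lower-bound ingredient \eqref{QCxQinvQCxQ1N} of the paper: if each row of each `Q_i` has
squared norm `N`, then
`Tr[(Q_a Q_aᵀ + η Q_b Q_bᵀ + C_Z)⁻¹ Q_a Q_aᵀ] ≤ ∑ᵢ N mᵢ / ((1+η) N + σᵢ²)`,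
where `Q_a` stacks the `Q_i`, `Q_b = ⊕ᵢ Q_i` and `C_Z = ⊕ᵢ σᵢ² I`. -/
theorem stmt_8 {k n : ℕ} (hk : 1 ≤ k) (hn : 0 < n) (m : Fin k → ℕ) (hm : ∀ i, 0 < m i)
    (N η : ℝ) (hN : 0 < N) (hη : 0 ≤ η)
    (σ : Fin k → ℝ) (hσ : ∀ i, 0 < σ i)
    (Q : ∀ i, Matrix (Fin (m i)) (Fin n) ℝ)
    (hrows : ∀ i (j : Fin (m i)), ∑ l, (Q i j l) ^ 2 = N) :
    Matrix.trace
        ((stackedMatrix Q * (stackedMatrix Q)ᵀ +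
            η • (Matrix.blockDiagonal' Q * (Matrix.blockDiagonal' Q)ᵀ) +
            Matrix.diagonal (fun p : Σ i : Fin k, Fin (m i) => σ p.1 ^ 2))⁻¹ *
          (stackedMatrix Q * (stackedMatrix Q)ᵀ)) ≤
      ∑ i, N * (m i : ℝ) / ((1 + η) * N + σ i ^ 2) :=
  stmt_8_general m N η hN hη σ hσ Q hrows
end

section
/- Let k ≥ 1 and N ≥ 1 be integers, let η > 0 and σ₁, …, σ_k > 0, and let m₁, …, m_k be positive integers. For each i let Q_i be a real m_i × 2N matrix such that for every l with 1 ≤ l ≤ N one has (Q_iᵀ Q_i)(l,l) + (Q_iᵀ Q_i)(N+l, N+l) = m_i. Let Λ be the k×k matrix with diagonal entries 1 + η and off-diagonal entries 1, and let Γ = Λ⁻¹. Then Tr[( ⊕_{i=1}^{k} (1/σ_i²) Q_iᵀ Q_i + Γ ⊗ I_{2N} )⁻¹] ≥ 2N · Tr[( Diag(m₁/(2σ₁²), …, m_k/(2σ_k²)) + Γ )⁻¹]. -/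
/-!
For symmetric `Y` and positive definite `M`, expanding `tr((Y - M⁻¹) M (Y - M⁻¹)ᵀ) ≥ 0` gives
`tr M⁻¹ ≥ 2 tr Y - tr(Y M Y)`, with equality at `Y = M⁻¹`. The right-hand side is affine in `M`
and invariant under orthogonal conjugation of `M` and `Y`, so `tr M⁻¹ ≥ tr M'⁻¹` whenever `M'` is
the average of finitely many orthogonal conjugates of `M` (take `Y = M'⁻¹`).

Conjugating `M = ⊕ᵢ Aᵢ + Γ ⊗ I`, where `Aᵢ = σᵢ⁻² Qᵢᵀ Qᵢ`, by `I ⊗ V`, with `V` running over the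
signed permutation matrices of the `2N` coordinates, fixes `Γ ⊗ I` and replaces `Aᵢ` by
`V Aᵢ Vᵀ`. Averaging over the sign changes kills the off-diagonal entries and averaging over the
permutations equalises the diagonal ones, so the average of `V Aᵢ Vᵀ` is
`(tr Aᵢ / 2N) I = mᵢ / (2σᵢ²) I` by the hypothesis on the diagonal of `Qᵢᵀ Qᵢ`. Hence
`M' = (Diag(mᵢ / (2σᵢ²)) + Γ) ⊗ I_{2N}`, and `tr M'⁻¹` is the right-hand side of the inequality.
-/

open Matrix
open scoped Kronecker

/-- The block diagonal matrix `⊕ᵢ (1/σᵢ²) Qᵢᵀ Qᵢ`, indexed consistently with the Kronecker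
product `Γ ⊗ I_{2N}` (here the `2N` coordinates are modelled by `Fin N ⊕ Fin N`). -/
noncomputable def blockDirectSum {k N : ℕ} {m : Fin k → ℕ} (σ : Fin k → ℝ)
    (Q : ∀ i, Matrix (Fin (m i)) (Fin N ⊕ Fin N) ℝ) :
    Matrix (Fin k × (Fin N ⊕ Fin N)) (Fin k × (Fin N ⊕ Fin N)) ℝ :=
  Matrix.of fun p q =>
    if p.1 = q.1 then (σ p.1 ^ 2)⁻¹ * ((Q p.1)ᵀ * Q p.1) p.2 q.2 else 0

theorem kronecker_sum {R α l m n p : Type*} [CommSemiring R] (X : Matrix l m R) (s : Finset α)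
    (B : α → Matrix n p R) : X ⊗ₖ (∑ a ∈ s, B a) = ∑ a ∈ s, X ⊗ₖ B a :=
  map_sum (kroneckerBilinear (R := R) X) B s

theorem sum_kronecker {R α l m n p : Type*} [CommSemiring R] (s : Finset α)
    (B : α → Matrix l m R) (X : Matrix n p R) : (∑ a ∈ s, B a) ⊗ₖ X = ∑ a ∈ s, B a ⊗ₖ X :=
  map_sum ((kroneckerBilinear (R := R)).flip X) B s

section TraceInverse

variable {ι : Type*} [Fintype ι] [DecidableEq ι]

theorem two_mul_trace_sub_trace_mul_mul_le_trace_inv {M : Matrix ι ι ℝ} (hM : M.PosDef)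
    {Y : Matrix ι ι ℝ} (hY : Yᵀ = Y) :
    2 * Y.trace - (Y * M * Y).trace ≤ M⁻¹.trace := by
  have hdet : IsUnit M.det := hM.isUnit.map detMonoidHom
  have hMinv : (M⁻¹)ᵀ = M⁻¹ := by
    rw [transpose_nonsing_inv, ← conjTranspose_eq_transpose_of_trivial, hM.isHermitian]
  have hZ : (Y - M⁻¹)ᴴ = Y - M⁻¹ := by
    rw [conjTranspose_eq_transpose_of_trivial, transpose_sub, hY, hMinv]
  have hexp : (Y - M⁻¹) * M * (Y - M⁻¹)ᴴ = Y * M * Y - Y - Y + M⁻¹ := by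
    rw [hZ, Matrix.sub_mul, Matrix.mul_sub, Matrix.sub_mul, Matrix.sub_mul,
      Matrix.mul_assoc Y M M⁻¹, mul_nonsing_inv _ hdet, Matrix.mul_one,
      nonsing_inv_mul _ hdet, Matrix.one_mul, Matrix.one_mul]
    abel
  have hnonneg := (hM.posSemidef.mul_mul_conjTranspose_same (Y - M⁻¹)).trace_nonneg
  rw [hexp, trace_add, trace_sub, trace_sub] at hnonneg
  linarith

theorem trace_inv_le_of_sum_conj {α : Type*} [Fintype α] [Nonempty α] (U : α → Matrix ι ι ℝ)
    (hU : ∀ a, U a * (U a)ᵀ = 1) {M M' : Matrix ι ι ℝ} (hM : M.PosDef) (hM' : M'.PosDef)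
    (hsum : ∑ a, U a * M * (U a)ᵀ = Fintype.card α • M') :
    M'⁻¹.trace ≤ M⁻¹.trace := by
  set Y := M'⁻¹
  have hY : Yᵀ = Y := by
    rw [transpose_nonsing_inv, ← conjTranspose_eq_transpose_of_trivial, hM'.isHermitian]
  have hconj : ∀ a, 2 * Y.trace - (Y * (U a * M * (U a)ᵀ) * Y).trace ≤ M⁻¹.trace := by
    intro a
    have hvar := two_mul_trace_sub_trace_mul_mul_le_trace_inv hM (Y := (U a)ᵀ * Y * U a)
      (by simp only [Matrix.mul_assoc, transpose_mul, hY, transpose_transpose])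
    have htr : ((U a)ᵀ * Y * U a).trace = Y.trace := by
      rw [trace_mul_cycle, hU a, Matrix.one_mul]
    have htr2 : ((U a)ᵀ * Y * U a * M * ((U a)ᵀ * Y * U a)).trace
        = (Y * (U a * M * (U a)ᵀ) * Y).trace := by
      rw [Matrix.mul_assoc, Matrix.mul_assoc, Matrix.mul_assoc, trace_mul_comm]
      simp only [Matrix.mul_assoc, hU a, Matrix.mul_one]
    rwa [htr, htr2] at hvar
  have hsumtr : ∑ a, (Y * (U a * M * (U a)ᵀ) * Y).trace = Fintype.card α * Y.trace := by
    rw [← trace_sum, ← Finset.sum_mul, ← Finset.mul_sum, hsum, Matrix.mul_smul, Matrix.smul_mul,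
      trace_smul, nsmul_eq_mul, nonsing_inv_mul _ (hM'.isUnit.map detMonoidHom), Matrix.one_mul]
  have hle := Finset.sum_le_sum fun a (_ : a ∈ Finset.univ) => hconj a
  rw [Finset.sum_sub_distrib, hsumtr, Finset.sum_const, Finset.sum_const, Finset.card_univ,
    nsmul_eq_mul, nsmul_eq_mul] at hle
  have hcard : (0 : ℝ) < Fintype.card α := by exact_mod_cast Fintype.card_pos
  exact le_of_mul_le_mul_left (by linarith) hcard

end TraceInverse

section SignedPermutation

variable {ι : Type*} [Fintype ι] [DecidableEq ι]

def signedPermMatrix (g : Equiv.Perm ι × (ι → ℤˣ)) : Matrix ι ι ℝ :=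
  diagonal (fun i => ((g.2 i : ℤ) : ℝ)) * g.1.permMatrix ℝ

theorem units_cast_mul_self (u : ℤˣ) : ((u : ℤ) : ℝ) * (u : ℤ) = 1 := by
  rw [← Int.cast_mul, ← Units.val_mul, Int.units_mul_self, Units.val_one, Int.cast_one]

theorem signedPermMatrix_mul_transpose (g : Equiv.Perm ι × (ι → ℤˣ)) :
    signedPermMatrix g * (signedPermMatrix g)ᵀ = 1 := by
  simp [signedPermMatrix, transpose_mul, Matrix.mul_assoc,
    ← Matrix.mul_assoc _ (g.1⁻¹.permMatrix ℝ), ← permMatrix_mul, units_cast_mul_self]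

theorem signedPermMatrix_mul_mul_transpose_apply (g : Equiv.Perm ι × (ι → ℤˣ))
    (A : Matrix ι ι ℝ) (x y : ι) :
    (signedPermMatrix g * A * (signedPermMatrix g)ᵀ) x y
      = ((g.2 x : ℤ) : ℝ) * (g.2 y : ℤ) * A (g.1 x) (g.1 y) := by
  simp only [signedPermMatrix, Matrix.mul_assoc, PEquiv.toMatrix_toPEquiv_mul, transpose_mul,
    transpose_permMatrix, diagonal_transpose, Equiv.Perm.coe_inv, submatrix_id_mul_left,
    Equiv.symm_symm, diagonal_mul, mul_diagonal, submatrix_apply]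
  ring

theorem sum_units_cast_mul_eq_zero {x y : ι} (hxy : x ≠ y) :
    ∑ ε : ι → ℤˣ, ((ε x : ℤ) : ℝ) * (ε y : ℤ) = 0 := by
  set negAt : (ι → ℤˣ) → (ι → ℤˣ) := fun ε => Function.update ε x (-ε x)
  have hnegAt : Function.Involutive negAt := by
    intro ε
    simp [negAt]
  have hneg := Equiv.sum_comp hnegAt.toPerm (fun ε : ι → ℤˣ => ((ε x : ℤ) : ℝ) * (ε y : ℤ))
  simp only [Function.Involutive.coe_toPerm, Function.update_self, Units.val_neg, Int.cast_neg,
    Function.update_of_ne hxy.symm, neg_mul, Finset.sum_neg_distrib, negAt] at hneg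
  linarith

theorem card_mul_sum_perm_apply (f : ι → ℝ) (x : ι) :
    Fintype.card ι * ∑ π : Equiv.Perm ι, f (π x) = Fintype.card (Equiv.Perm ι) * ∑ u, f u := by
  have hindep : ∀ y, ∑ π : Equiv.Perm ι, f (π x) = ∑ π : Equiv.Perm ι, f (π y) := fun y =>
    Fintype.sum_equiv (Equiv.mulRight (Equiv.swap y x)) _ _ (by simp)
  calc Fintype.card ι * ∑ π : Equiv.Perm ι, f (π x)
      = ∑ y, ∑ π : Equiv.Perm ι, f (π y) := by simp [← hindep]
    _ = ∑ π : Equiv.Perm ι, ∑ u, f u := by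
      rw [Finset.sum_comm]
      exact Finset.sum_congr rfl fun π _ => Equiv.sum_comp π f
    _ = _ := by simp

theorem sum_signedPermMatrix_conj {A : Matrix ι ι ℝ} {d : ℝ}
    (hA : A.trace = Fintype.card ι * d) :
    ∑ g, signedPermMatrix g * A * (signedPermMatrix g)ᵀ
      = (Fintype.card (Equiv.Perm ι × (ι → ℤˣ)) * d) • (1 : Matrix ι ι ℝ) := by
  ext x y
  simp only [Matrix.sum_apply, signedPermMatrix_mul_mul_transpose_apply, Fintype.sum_prod_type,
    Matrix.smul_apply, smul_eq_mul, Fintype.card_prod]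
  rcases eq_or_ne x y with rfl | hxy
  · have hperm : ∑ π : Equiv.Perm ι, A (π x) (π x) = Fintype.card (Equiv.Perm ι) * d := by
      have hcard : (Fintype.card ι : ℝ) ≠ 0 := by
        have : Nonempty ι := ⟨x⟩
        exact_mod_cast Fintype.card_ne_zero
      have hsum := card_mul_sum_perm_apply (fun u => A u u) x
      rw [show ∑ u, A u u = A.trace from rfl, hA] at hsum
      exact mul_left_cancel₀ hcard (by linarith)
    simp only [units_cast_mul_self, one_mul, Finset.sum_const, Finset.card_univ, nsmul_eq_mul,
      ← Finset.mul_sum, hperm, one_apply_eq]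
    push_cast
    ring
  · simp only [← Finset.sum_mul, sum_units_cast_mul_eq_zero hxy, zero_mul, Finset.sum_const_zero,
      one_apply_ne hxy, mul_zero]

end SignedPermutation

section KroneckerBlocks

variable {κ ι : Type*} [Fintype κ] [DecidableEq κ] [Fintype ι] [DecidableEq ι]

theorem one_kronecker_mul_transpose {V : Matrix ι ι ℝ} (hV : V * Vᵀ = 1) :
    ((1 : Matrix κ κ ℝ) ⊗ₖ V) * ((1 : Matrix κ κ ℝ) ⊗ₖ V)ᵀ = 1 := by
  rw [← kroneckerMap_transpose, ← mul_kronecker_mul, transpose_one, Matrix.one_mul, hV,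
    one_kronecker_one]

theorem one_kronecker_conj_blocks_add_kronecker_one {V : Matrix ι ι ℝ} (hV : V * Vᵀ = 1)
    (A : κ → Matrix ι ι ℝ) (Γ : Matrix κ κ ℝ) :
    ((1 : Matrix κ κ ℝ) ⊗ₖ V) * (∑ i, single i i 1 ⊗ₖ A i + Γ ⊗ₖ 1)
        * ((1 : Matrix κ κ ℝ) ⊗ₖ V)ᵀ
      = ∑ i, single i i 1 ⊗ₖ (V * A i * Vᵀ) + Γ ⊗ₖ 1 := by
  simp only [← kroneckerMap_transpose, transpose_one, Matrix.mul_add, Matrix.add_mul,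
    Finset.mul_sum, Finset.sum_mul, ← mul_kronecker_mul, Matrix.one_mul, Matrix.mul_one, hV]

theorem sum_signedPermMatrix_conj_blocks_add_kronecker_one (A : κ → Matrix ι ι ℝ) (d : κ → ℝ)
    (hA : ∀ i, (A i).trace = Fintype.card ι * d i) (Γ : Matrix κ κ ℝ) :
    ∑ g, ((1 : Matrix κ κ ℝ) ⊗ₖ signedPermMatrix g) * (∑ i, single i i 1 ⊗ₖ A i + Γ ⊗ₖ 1)
        * ((1 : Matrix κ κ ℝ) ⊗ₖ signedPermMatrix g)ᵀ
      = Fintype.card (Equiv.Perm ι × (ι → ℤˣ)) • ((diagonal d + Γ) ⊗ₖ 1) := by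
  have hblock : ∀ i, ∑ g, single i i (1 : ℝ) ⊗ₖ (signedPermMatrix g * A i * (signedPermMatrix g)ᵀ)
      = Fintype.card (Equiv.Perm ι × (ι → ℤˣ)) • (single i i (d i) ⊗ₖ (1 : Matrix ι ι ℝ)) := by
    intro i
    rw [← kronecker_sum, sum_signedPermMatrix_conj (hA i), mul_smul, kronecker_smul,
      kronecker_smul, ← smul_kronecker, smul_single, smul_eq_mul, mul_one, Nat.cast_smul_eq_nsmul]
  simp only [one_kronecker_conj_blocks_add_kronecker_one (signedPermMatrix_mul_transpose _),
    Finset.sum_add_distrib, Finset.sum_const, Finset.card_univ]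
  rw [Finset.sum_comm, Finset.sum_congr rfl fun i _ => hblock i, ← Finset.smul_sum, ← smul_add,
    add_kronecker, ← sum_single_eq_diagonal, sum_kronecker]

theorem posDef_sum_single_kronecker_add_kronecker_one {A : κ → Matrix ι ι ℝ}
    (hA : ∀ i, (A i).PosSemidef) {Γ : Matrix κ κ ℝ} (hΓ : Γ.PosDef) :
    (∑ i, single i i 1 ⊗ₖ A i + Γ ⊗ₖ (1 : Matrix ι ι ℝ)).PosDef := by
  have hsingle : ∀ i : κ, (single i i (1 : ℝ)).PosSemidef := fun i => by
    rw [← diagonal_single]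
    exact PosSemidef.diagonal (Pi.single_nonneg.mpr zero_le_one)
  exact PosDef.posSemidef_add (posSemidef_sum _ fun i _ => (hsingle i).kronecker (hA i))
    (hΓ.kronecker PosDef.one)

end KroneckerBlocks

theorem posDef_of_apply_eq_ite {ι : Type*} [Fintype ι] [DecidableEq ι] {η : ℝ} (hη : 0 < η)
    {Λ : Matrix ι ι ℝ} (hΛ : ∀ i j, Λ i j = if i = j then 1 + η else 1) : Λ.PosDef := by
  have hsplit : Λ = vecMulVec 1 (star 1) + η • 1 := by
    ext i j
    rw [hΛ]
    split_ifs with h <;> simp [one_apply, h, add_comm]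
  rw [hsplit]
  exact PosDef.posSemidef_add (posSemidef_vecMulVec_self_star 1) (PosDef.one.smul hη)

theorem trace_eq_card_mul_of_apply_inl_add_apply_inr {ν : Type*} [Fintype ν]
    {B : Matrix (ν ⊕ ν) (ν ⊕ ν) ℝ} {c : ℝ}
    (hB : ∀ l, B (.inl l) (.inl l) + B (.inr l) (.inr l) = c) :
    B.trace = Fintype.card ν * c := by
  simp [trace, Fintype.sum_sum_type, ← Finset.sum_add_distrib, hB]

theorem blockDirectSum_eq_sum_single_kronecker {k N : ℕ} {m : Fin k → ℕ} (σ : Fin k → ℝ)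
    (Q : ∀ i, Matrix (Fin (m i)) (Fin N ⊕ Fin N) ℝ) :
    blockDirectSum σ Q = ∑ i, single i i 1 ⊗ₖ ((σ i ^ 2)⁻¹ • ((Q i)ᵀ * Q i)) := by
  ext ⟨i, a⟩ ⟨j, b⟩
  simp only [blockDirectSum, of_apply, Matrix.sum_apply, kronecker_apply, single_apply,
    Matrix.smul_apply, smul_eq_mul]
  split_ifs with h
  · subst h
    simp
  · refine (Finset.sum_eq_zero fun c _ => ?_).symm
    simp [show ¬(c = i ∧ c = j) from fun hc => h (hc.1 ▸ hc.2)]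

theorem stmt_10_general {k N : ℕ}
    (η : ℝ) (hη : 0 < η) (σ : Fin k → ℝ)
    (m : Fin k → ℕ)
    (Q : ∀ i, Matrix (Fin (m i)) (Fin N ⊕ Fin N) ℝ)
    (hdiag : ∀ i (l : Fin N),
      ((Q i)ᵀ * Q i) (Sum.inl l) (Sum.inl l) + ((Q i)ᵀ * Q i) (Sum.inr l) (Sum.inr l)
        = (m i : ℝ))
    (Λ : Matrix (Fin k) (Fin k) ℝ)
    (hΛ : ∀ i j : Fin k, Λ i j = if i = j then 1 + η else 1) :
    Matrix.trace
        ((blockDirectSum σ Q + Λ⁻¹ ⊗ₖ (1 : Matrix (Fin N ⊕ Fin N) (Fin N ⊕ Fin N) ℝ))⁻¹) ≥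
      (2 * N : ℝ) *
        Matrix.trace ((Matrix.diagonal (fun i => (m i : ℝ) / (2 * σ i ^ 2)) + Λ⁻¹)⁻¹) := by
  set A := fun i => (σ i ^ 2)⁻¹ • ((Q i)ᵀ * Q i)
  set d := fun i => (m i : ℝ) / (2 * σ i ^ 2)
  have hΓ : (Λ⁻¹).PosDef := (posDef_of_apply_eq_ite hη hΛ).inv
  have htrace : ∀ i, (A i).trace = Fintype.card (Fin N ⊕ Fin N) * d i := by
    intro i
    rw [trace_smul, trace_eq_card_mul_of_apply_inl_add_apply_inr (hdiag i)]
    simp only [d, Fintype.card_sum, Fintype.card_fin, Nat.cast_add, smul_eq_mul]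
    ring
  have hA : ∀ i, (A i).PosSemidef := fun i =>
    (posSemidef_conjTranspose_mul_self (Q i)).smul (by positivity)
  have hM := posDef_sum_single_kronecker_add_kronecker_one hA hΓ
  have hM' : ((diagonal d + Λ⁻¹) ⊗ₖ (1 : Matrix (Fin N ⊕ Fin N) _ ℝ)).PosDef :=
    (PosDef.posSemidef_add (PosSemidef.diagonal fun i => by positivity) hΓ).kronecker PosDef.one
  have hle := trace_inv_le_of_sum_conj _
    (fun g => one_kronecker_mul_transpose (signedPermMatrix_mul_transpose g)) hM hM'
    (sum_signedPermMatrix_conj_blocks_add_kronecker_one A d htrace _)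
  rw [inv_kronecker, inv_one, trace_kronecker, trace_one, Fintype.card_sum, Fintype.card_fin]
    at hle
  rw [blockDirectSum_eq_sum_single_kronecker, ge_iff_le]
  push_cast at hle
  linarith

/-- Lower bound \eqref{Dblowerupper} of the paper: if for every `i` and every `l ≤ N` the
`l`-th and `(N+l)`-th diagonal entries of `Qᵢᵀ Qᵢ` add up to `mᵢ`, then (with `Γ = Λ⁻¹`)
`Tr[(⊕ᵢ (1/σᵢ²) Qᵢᵀ Qᵢ + Γ ⊗ I_{2N})⁻¹] ≥ 2N · Tr[(Diag(mᵢ/(2σᵢ²)) + Γ)⁻¹]`. -/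
theorem stmt_10 {k N : ℕ} (hk : 1 ≤ k) (hN : 1 ≤ N)
    (η : ℝ) (hη : 0 < η) (σ : Fin k → ℝ) (hσ : ∀ i, 0 < σ i)
    (m : Fin k → ℕ) (hm : ∀ i, 0 < m i)
    (Q : ∀ i, Matrix (Fin (m i)) (Fin N ⊕ Fin N) ℝ)
    (hdiag : ∀ i (l : Fin N),
      ((Q i)ᵀ * Q i) (Sum.inl l) (Sum.inl l) + ((Q i)ᵀ * Q i) (Sum.inr l) (Sum.inr l)
        = (m i : ℝ))
    (Λ : Matrix (Fin k) (Fin k) ℝ)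
    (hΛ : ∀ i j : Fin k, Λ i j = if i = j then 1 + η else 1) :
    Matrix.trace
        ((blockDirectSum σ Q + Λ⁻¹ ⊗ₖ (1 : Matrix (Fin N ⊕ Fin N) (Fin N ⊕ Fin N) ℝ))⁻¹) ≥
      (2 * N : ℝ) *
        Matrix.trace ((Matrix.diagonal (fun i => (m i : ℝ) / (2 * σ i ^ 2)) + Λ⁻¹)⁻¹) :=
  stmt_10_general η hη σ m Q hdiag Λ hΛ
end

section
/- Let k ≥ 1 and N ≥ 1 be integers, let η > 0 and σ₁, …, σ_k > 0, and let m₁, …, m_k be positive integers. For each i let Q_i be a real m_i × 2N matrix such that for every l with 1 ≤ l ≤ N one has (Q_iᵀ Q_i)(l,l) + (Q_iᵀ Q_i)(N+l, N+l) = m_i. Then Tr[( I_{2N} + ∑_{i=1}^{k} Q_iᵀ (η Q_i Q_iᵀ + σ_i² I_{m_i})⁻¹ Q_i )⁻¹] ≥ 2N / ( (1 + k/η) − (k²/η) · ( k + η ∑_{i=1}^{k} m_i/(2σ_i²) )⁻¹ ). -/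
/-!
Writing `A = I + ∑ᵢ Bᵢ` with `Bᵢ = Qᵢᵀ (η Qᵢ Qᵢᵀ + σᵢ² I)⁻¹ Qᵢ`, the bound `Tr A⁻¹ ≥ (2N)² / Tr A`
reduces the claim to an upper bound on `Tr A`. The push-through identity turns `Bᵢ` into
`η⁻¹ (I - σᵢ² Wᵢ⁻¹)` with `Wᵢ = η Qᵢᵀ Qᵢ + σᵢ² I`, whose trace is fixed by the diagonal condition, so
the same trace-inverse bound applied to `Wᵢ` gives `Tr Bᵢ ≤ 2N aᵢ / (1 + η aᵢ)` with
`aᵢ = mᵢ / (2σᵢ²)`. Finally, `aᵢ / (1 + η aᵢ) = η⁻¹ (1 - (1 + η aᵢ)⁻¹)` and Sedrakyan's inequality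
`∑ᵢ (1 + η aᵢ)⁻¹ ≥ k² / (k + η ∑ᵢ aᵢ)` give the scalar bound.
-/

open Matrix

namespace Matrix

section TraceInv

variable {n : Type*} [Fintype n] [DecidableEq n]

/-- Expanding `(c A - 1) A⁻¹ (c A - 1) = c² A - 2c + A⁻¹`, which is positive semidefinite. -/
lemma PosDef.two_mul_card_sub_sq_mul_trace_le_trace_inv {A : Matrix n n ℝ} (hA : A.PosDef)
    (c : ℝ) : 2 * c * Fintype.card n - c ^ 2 * A.trace ≤ A⁻¹.trace := by
  have hdet : IsUnit A.det := hA.det_pos.ne'.isUnit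
  have hsymm : (c • A - 1)ᴴ = c • A - 1 := by
    rw [conjTranspose_sub, conjTranspose_smul, conjTranspose_one, star_trivial, hA.1.eq]
  have hpsd := hA.inv.posSemidef.mul_mul_conjTranspose_same (c • A - 1)
  have hexpand : (c • A - 1) * A⁻¹ * (c • A - 1) = (c * c) • A - c • 1 - c • 1 + A⁻¹ := by
    have hleft : (c • A - 1) * A⁻¹ = c • (1 : Matrix n n ℝ) - A⁻¹ := by
      rw [sub_mul, smul_mul_assoc, mul_nonsing_inv _ hdet, one_mul]
    rw [hleft, sub_mul, smul_mul_assoc, one_mul, mul_sub, mul_smul_comm, nonsing_inv_mul _ hdet,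
      mul_one, smul_sub, smul_smul]
    abel
  have htr := hpsd.trace_nonneg
  rw [hsymm, hexpand] at htr
  simp only [trace_add, trace_sub, trace_smul, trace_one, smul_eq_mul] at htr
  linarith

lemma PosDef.card_div_le_trace_inv {A : Matrix n n ℝ} (hA : A.PosDef) {t : ℝ} (ht : 0 < t)
    (htr : A.trace ≤ Fintype.card n * t) : Fintype.card n / t ≤ A⁻¹.trace := by
  have h := hA.two_mul_card_sub_sq_mul_trace_le_trace_inv t⁻¹
  have hsq : t⁻¹ ^ 2 * A.trace ≤ t⁻¹ ^ 2 * (Fintype.card n * t) := by gcongr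
  have hsimp : t⁻¹ ^ 2 * (Fintype.card n * t) = Fintype.card n / t := by field_simp
  have hsimp' : 2 * t⁻¹ * Fintype.card n = 2 * (Fintype.card n / t) := by ring
  linarith

end TraceInv

section Gram

variable {p q : Type*} [Fintype p] [Fintype q] [DecidableEq p]

lemma posDef_smul_mul_transpose_add_smul_one (Q : Matrix p q ℝ) {η c : ℝ} (hη : 0 ≤ η)
    (hc : 0 < c) : (η • (Q * Qᵀ) + c • (1 : Matrix p p ℝ)).PosDef := by
  simpa using PosDef.posSemidef_add ((posSemidef_self_mul_conjTranspose Q).smul hη)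
    (PosDef.one.smul hc)

lemma posSemidef_transpose_mul_inv_add_smul_mul (Q : Matrix p q ℝ) {η c : ℝ} (hη : 0 ≤ η)
    (hc : 0 < c) : (Qᵀ * (η • (Q * Qᵀ) + c • (1 : Matrix p p ℝ))⁻¹ * Q).PosSemidef := by
  simpa using
    (posDef_smul_mul_transpose_add_smul_one Q hη hc).inv.posSemidef.conjTranspose_mul_mul_same Q

variable [DecidableEq q]

lemma inv_mul_eq_mul_inv_of_mul_eq {R : Type*} [CommRing R] {M : Matrix p p R}
    {W : Matrix q q R} {Q : Matrix p q R} (hM : IsUnit M.det) (hW : IsUnit W.det)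
    (h : M * Q = Q * W) : M⁻¹ * Q = Q * W⁻¹ :=
  calc M⁻¹ * Q = M⁻¹ * (Q * W) * W⁻¹ := by
        rw [Matrix.mul_assoc, Matrix.mul_assoc, mul_nonsing_inv _ hW, Matrix.mul_one]
    _ = Q * W⁻¹ := by rw [← h, nonsing_inv_mul_cancel_left _ _ hM]

lemma transpose_mul_inv_add_smul_mul_eq {Q : Matrix p q ℝ} {η c : ℝ} (hη : η ≠ 0)
    (hM : IsUnit (η • (Q * Qᵀ) + c • (1 : Matrix p p ℝ)).det)
    (hW : IsUnit (η • (Qᵀ * Q) + c • (1 : Matrix q q ℝ)).det) :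
    Qᵀ * (η • (Q * Qᵀ) + c • 1)⁻¹ * Q = η⁻¹ • (1 - c • (η • (Qᵀ * Q) + c • 1)⁻¹) := by
  have hcomm : (η • (Q * Qᵀ) + c • (1 : Matrix p p ℝ)) * Q = Q * (η • (Qᵀ * Q) + c • 1) := by
    simp only [Matrix.add_mul, Matrix.mul_add, Matrix.smul_mul, Matrix.mul_smul, Matrix.one_mul,
      Matrix.mul_one, Matrix.mul_assoc]
  have hQQ : Qᵀ * Q = η⁻¹ • ((η • (Qᵀ * Q) + c • 1) - c • (1 : Matrix q q ℝ)) := by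
    rw [add_sub_cancel_right, smul_smul, inv_mul_cancel₀ hη, one_smul]
  rw [Matrix.mul_assoc, inv_mul_eq_mul_inv_of_mul_eq hM hW hcomm, ← Matrix.mul_assoc]
  nth_rewrite 1 [hQQ]
  rw [Matrix.smul_mul, Matrix.sub_mul, mul_nonsing_inv _ hW, Matrix.smul_mul, Matrix.one_mul]

lemma trace_transpose_mul_inv_add_smul_mul_le (Q : Matrix p q ℝ) {η c t : ℝ} (hη : 0 < η)
    (hc : 0 < c) (ht : 0 ≤ t) (hQ : (Qᵀ * Q).trace ≤ Fintype.card q * t) :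
    (Qᵀ * (η • (Q * Qᵀ) + c • (1 : Matrix p p ℝ))⁻¹ * Q).trace
      ≤ Fintype.card q * (t / (η * t + c)) := by
  have hM := posDef_smul_mul_transpose_add_smul_one Q hη.le hc
  have hW : (η • (Qᵀ * Q) + c • (1 : Matrix q q ℝ)).PosDef := by
    simpa using posDef_smul_mul_transpose_add_smul_one Qᵀ hη.le hc
  have hpos : 0 < η * t + c := by positivity
  have hWtr : (η • (Qᵀ * Q) + c • (1 : Matrix q q ℝ)).trace ≤ Fintype.card q * (η * t + c) := by
    rw [trace_add, trace_smul, trace_smul, trace_one, smul_eq_mul, smul_eq_mul]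
    nlinarith
  have hWinv := hW.card_div_le_trace_inv hpos hWtr
  rw [transpose_mul_inv_add_smul_mul_eq hη.ne' hM.det_pos.ne'.isUnit hW.det_pos.ne'.isUnit,
    trace_smul, trace_sub, trace_smul, trace_one, smul_eq_mul, smul_eq_mul]
  have hrhs : Fintype.card q * (t / (η * t + c))
      = η⁻¹ * (Fintype.card q - c * (Fintype.card q / (η * t + c))) := by
    field_simp
    ring
  rw [hrhs]
  gcongr

end Gram

end Matrix

lemma sum_div_one_add_mul_le {ι : Type*} [Fintype ι] {η : ℝ} (hη : 0 < η) {a : ι → ℝ}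
    (ha : ∀ i, 0 ≤ a i) :
    1 + ∑ i, a i / (1 + η * a i)
      ≤ (1 + (Fintype.card ι : ℝ) / η)
          - ((Fintype.card ι : ℝ) ^ 2 / η) * ((Fintype.card ι : ℝ) + η * ∑ i, a i)⁻¹ := by
  have hg : ∀ i ∈ Finset.univ, 0 < 1 + η * a i := fun i _ => by have := ha i; positivity
  have hsedrakyan := Finset.sq_sum_div_le_sum_sq_div Finset.univ (fun _ => (1 : ℝ)) hg
  have hsum_g : ∑ i, (1 + η * a i) = Fintype.card ι + η * ∑ i, a i := by
    simp [Finset.sum_add_distrib, Finset.mul_sum]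
  have hterm : ∀ i, a i / (1 + η * a i) = η⁻¹ * (1 - 1 ^ 2 / (1 + η * a i)) := fun i => by
    rw [one_pow, one_sub_div (hg i (Finset.mem_univ i)).ne', add_sub_cancel_left, mul_div_assoc',
      inv_mul_cancel_left₀ hη.ne']
  simp only [Finset.sum_const, Finset.card_univ, nsmul_eq_mul, mul_one, hsum_g] at hsedrakyan
  simp only [hterm, ← Finset.mul_sum, Finset.sum_sub_distrib, Finset.sum_const, Finset.card_univ,
    nsmul_eq_mul, mul_one]
  have hη' : 0 ≤ η⁻¹ := by positivity
  have key := mul_le_mul_of_nonneg_left hsedrakyan hη'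
  rw [div_eq_mul_inv] at key
  have hrhs : (1 + (Fintype.card ι : ℝ) / η)
      - ((Fintype.card ι : ℝ) ^ 2 / η) * ((Fintype.card ι : ℝ) + η * ∑ i, a i)⁻¹
      = 1 + η⁻¹ * Fintype.card ι
        - η⁻¹ * ((Fintype.card ι : ℝ) ^ 2 * ((Fintype.card ι : ℝ) + η * ∑ i, a i)⁻¹) := by
    ring
  rw [hrhs]
  linarith

theorem stmt_11_general {k N : ℕ}
    (η : ℝ) (hη : 0 < η) (σ : Fin k → ℝ) (hσ : ∀ i, 0 < σ i)
    (m : Fin k → ℕ)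
    (Q : ∀ i, Matrix (Fin (m i)) (Fin N ⊕ Fin N) ℝ)
    (hdiag : ∀ i (l : Fin N),
      ((Q i)ᵀ * Q i) (Sum.inl l) (Sum.inl l) + ((Q i)ᵀ * Q i) (Sum.inr l) (Sum.inr l)
        = (m i : ℝ)) :
    Matrix.trace
        ((1 + ∑ i, (Q i)ᵀ * (η • (Q i * (Q i)ᵀ) + σ i ^ 2 • (1 : Matrix (Fin (m i)) (Fin (m i)) ℝ))⁻¹ * Q i)⁻¹) ≥
      (2 * N : ℝ) /
        ((1 + (k : ℝ) / η) -
          ((k : ℝ) ^ 2 / η) * ((k : ℝ) + η * ∑ i, (m i : ℝ) / (2 * σ i ^ 2))⁻¹) := by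
  set a : Fin k → ℝ := fun i => (m i : ℝ) / (2 * σ i ^ 2)
  have ha : ∀ i, 0 ≤ a i := fun i => by positivity
  have hcard : (Fintype.card (Fin N ⊕ Fin N) : ℝ) = 2 * N := by
    simp only [Fintype.card_sum, Fintype.card_fin, Nat.cast_add]
    ring
  have htrQQ : ∀ i, ((Q i)ᵀ * Q i).trace = Fintype.card (Fin N ⊕ Fin N) * ((m i : ℝ) / 2) := by
    intro i
    simp only [trace, diag, Fintype.sum_sum_type, ← Finset.sum_add_distrib, hdiag, hcard,
      Finset.sum_const, Finset.card_univ, Fintype.card_fin, nsmul_eq_mul]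
    ring
  have hblock : ∀ i, ((Q i)ᵀ * (η • (Q i * (Q i)ᵀ) + σ i ^ 2 • 1)⁻¹ * Q i).trace
      ≤ Fintype.card (Fin N ⊕ Fin N) * (a i / (1 + η * a i)) := by
    intro i
    have hσ0 := (hσ i).ne'
    convert trace_transpose_mul_inv_add_smul_mul_le (Q i) hη (pow_pos (hσ i) 2) (by positivity)
      (htrQQ i).le using 2
    simp only [a]
    field_simp
    ring
  have hA := PosDef.one.add_posSemidef <| posSemidef_sum Finset.univ fun i _ =>
    posSemidef_transpose_mul_inv_add_smul_mul (Q i) hη.le (pow_pos (hσ i) 2)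
  have htrA : (1 + ∑ i, (Q i)ᵀ * (η • (Q i * (Q i)ᵀ) + σ i ^ 2 • 1)⁻¹ * Q i).trace
      ≤ Fintype.card (Fin N ⊕ Fin N) * (1 + ∑ i, a i / (1 + η * a i)) := by
    rw [trace_add, trace_one, trace_sum, mul_add, mul_one, Finset.mul_sum]
    exact add_le_add le_rfl (Finset.sum_le_sum fun i _ => hblock i)
  have hpos : 0 < 1 + ∑ i, a i / (1 + η * a i) :=
    add_pos_of_pos_of_nonneg one_pos (Finset.sum_nonneg fun i _ => by have := ha i; positivity)
  have hscalar := sum_div_one_add_mul_le hη ha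
  rw [Fintype.card_fin] at hscalar
  calc (2 * N : ℝ) / _ ≤ 2 * N / (1 + ∑ i, a i / (1 + η * a i)) :=
        div_le_div_of_nonneg_left (by positivity) hpos hscalar
    _ ≤ _ := hcard ▸ hA.card_div_le_trace_inv hpos htrA

/-- Lower bound \eqref{m1minimizesD} of the paper: if for every `i` and every `l ≤ N` the
`l`-th and `(N+l)`-th diagonal entries of `Qᵢᵀ Qᵢ` add up to `mᵢ` (the `2N` coordinates are
modelled by `Fin N ⊕ Fin N`), then
`Tr[(I + ∑ᵢ Qᵢᵀ (η Qᵢ Qᵢᵀ + σᵢ² I)⁻¹ Qᵢ)⁻¹]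
  ≥ 2N / ((1 + k/η) − (k²/η) (k + η ∑ᵢ mᵢ/(2σᵢ²))⁻¹)`. -/
theorem stmt_11 {k N : ℕ} (hk : 1 ≤ k) (hN : 1 ≤ N)
    (η : ℝ) (hη : 0 < η) (σ : Fin k → ℝ) (hσ : ∀ i, 0 < σ i)
    (m : Fin k → ℕ) (hm : ∀ i, 0 < m i)
    (Q : ∀ i, Matrix (Fin (m i)) (Fin N ⊕ Fin N) ℝ)
    (hdiag : ∀ i (l : Fin N),
      ((Q i)ᵀ * Q i) (Sum.inl l) (Sum.inl l) + ((Q i)ᵀ * Q i) (Sum.inr l) (Sum.inr l)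
        = (m i : ℝ)) :
    Matrix.trace
        ((1 + ∑ i, (Q i)ᵀ * (η • (Q i * (Q i)ᵀ) + σ i ^ 2 • (1 : Matrix (Fin (m i)) (Fin (m i)) ℝ))⁻¹ * Q i)⁻¹) ≥
      (2 * N : ℝ) /
        ((1 + (k : ℝ) / η) -
          ((k : ℝ) ^ 2 / η) * ((k : ℝ) + η * ∑ i, (m i : ℝ) / (2 * σ i ^ 2))⁻¹) :=
  stmt_11_general η hη σ hσ m Q hdiag
end

section
/- Let k ≥ 1, let η > 0 and σ₁, …, σ_k > 0, and for each i let Q_i be a real m_i × n matrix. Then, in the Loewner order on n×n real symmetric matrices, ∑_{i=1}^{k} Q_iᵀ (η Q_i Q_iᵀ + σ_i² I_{m_i})⁻¹ Q_i ≼ (1/η) · ( k I_n − k² ( ∑_{i=1}^{k} ( (η/σ_i²) Q_iᵀ Q_i + I_n ) )⁻¹ ). -/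
/-!
Writing `Bᵢ = (η/σᵢ²) QᵢᵀQᵢ + I`, the push-through identity `(η QQᵀ + s I) Q = s Q B` turns each
summand `Qᵢᵀ (η QᵢQᵢᵀ + σᵢ² I)⁻¹ Qᵢ` into `η⁻¹ (I - Bᵢ⁻¹)`. The claim is then the matrix
harmonic–arithmetic mean inequality `k² (∑ Bᵢ)⁻¹ ≼ ∑ Bᵢ⁻¹`, which follows by summing
`(C - Bᵢ⁻¹) Bᵢ (C - Bᵢ⁻¹) ≽ 0` for `C = k (∑ Bᵢ)⁻¹`.
-/

open Matrix

namespace Matrix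

theorem transpose_mul_inv_mul_eq_smul_one_sub_inv {K m n : Type*} [Field K] [Fintype m]
    [Fintype n] [DecidableEq m] [DecidableEq n] {η s : K} (hη : η ≠ 0) (hs : s ≠ 0)
    (Q : Matrix m n K)
    (hA : IsUnit (η • (Q * Qᵀ) + s • 1 : Matrix m m K).det)
    (hB : IsUnit ((η / s) • (Qᵀ * Q) + 1 : Matrix n n K).det) :
    Qᵀ * (η • (Q * Qᵀ) + s • 1)⁻¹ * Q = η⁻¹ • (1 - ((η / s) • (Qᵀ * Q) + 1)⁻¹) := by
  set A : Matrix m m K := η • (Q * Qᵀ) + s • 1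
  set B : Matrix n n K := (η / s) • (Qᵀ * Q) + 1
  have hAQ : A * Q = s • (Q * B) := by
    simp only [A, B, Matrix.add_mul, Matrix.mul_add, Matrix.smul_mul, Matrix.mul_smul, smul_add,
      smul_smul, mul_div_cancel₀ _ hs, Matrix.one_mul, Matrix.mul_one, Matrix.mul_assoc]
  have hQB : Q * B⁻¹ = s • (A⁻¹ * Q) := by
    calc Q * B⁻¹ = A⁻¹ * (A * Q) * B⁻¹ := by rw [nonsing_inv_mul_cancel_left _ _ hA]
      _ = s • (A⁻¹ * Q) := by
        rw [hAQ, Matrix.mul_smul, Matrix.smul_mul, ← Matrix.mul_assoc,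
          mul_nonsing_inv_cancel_right _ _ hB]
  have h : 1 - B⁻¹ = η • (Qᵀ * A⁻¹ * Q) := by
    calc 1 - B⁻¹ = (B - 1) * B⁻¹ := by rw [Matrix.sub_mul, mul_nonsing_inv _ hB, Matrix.one_mul]
      _ = η • (Qᵀ * A⁻¹ * Q) := by
        rw [add_sub_cancel_right, Matrix.smul_mul, Matrix.mul_assoc, hQB, Matrix.mul_smul,
          smul_smul, div_mul_cancel₀ _ hs, Matrix.mul_assoc]
  rw [h, smul_smul, inv_mul_cancel₀ hη, one_smul]

theorem PosDef.smul_transpose_mul_self_add {m n : Type*} [Fintype m] [Fintype n]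
    (Q : Matrix m n ℝ) {c : ℝ} (hc : 0 ≤ c) {D : Matrix n n ℝ} (hD : D.PosDef) :
    (c • (Qᵀ * Q) + D).PosDef := by
  simpa using PosDef.posSemidef_add ((posSemidef_conjTranspose_mul_self Q).smul hc) hD

open scoped ComplexOrder in
theorem posSemidef_sum_inv_sub_card_sq_smul_inv_sum {ι 𝕜 n : Type*} [Fintype ι] [RCLike 𝕜]
    [Fintype n] [DecidableEq n] (B : ι → Matrix n n 𝕜) (hB : ∀ i, (B i).PosDef) :
    ((∑ i, (B i)⁻¹) - (Fintype.card ι : 𝕜) ^ 2 • (∑ i, B i)⁻¹).PosSemidef := by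
  set S := ∑ i, B i with hS
  set c : 𝕜 := (Fintype.card ι : 𝕜)
  set C := c • S⁻¹
  -- also when `S` is singular (e.g. `ι` empty), since then `S⁻¹ = 0`
  have hSS : S⁻¹ * S * S⁻¹ = S⁻¹ := by
    rcases nonsing_inv_cancel_or_zero S with ⟨h, -⟩ | h <;> simp [h]
  have hC : Cᴴ = C := by
    have hS : S.IsHermitian := (posSemidef_sum _ fun i _ => (hB i).posSemidef).isHermitian
    simp [C, c, conjTranspose_smul, hS.inv.eq]
  have hterm : ∀ i, ((B i)⁻¹ + C * B i * C - (2 : 𝕜) • C).PosSemidef := by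
    intro i
    have hBi : IsUnit (B i).det := (isUnit_iff_isUnit_det _).mp (hB i).isUnit
    have hexp : (C - (B i)⁻¹) * B i * (C - (B i)⁻¹) = (B i)⁻¹ + C * B i * C - (2 : 𝕜) • C := by
      simp only [Matrix.sub_mul, Matrix.mul_sub, Matrix.mul_assoc]
      rw [mul_nonsing_inv _ hBi, Matrix.mul_one, nonsing_inv_mul_cancel_left _ _ hBi,
        Matrix.mul_one, two_smul]
      abel
    have h := (hB i).posSemidef.mul_mul_conjTranspose_same (C - (B i)⁻¹)
    rwa [conjTranspose_sub, hC, (hB i).isHermitian.inv.eq, hexp] at h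
  have hsum : ∑ i, ((B i)⁻¹ + C * B i * C - (2 : 𝕜) • C) =
      (∑ i, (B i)⁻¹) - c ^ 2 • S⁻¹ := by
    rw [Finset.sum_sub_distrib, Finset.sum_add_distrib, ← Finset.sum_mul, ← Finset.mul_sum,
      Finset.sum_const, Finset.card_univ, ← Nat.cast_smul_eq_nsmul 𝕜, ← hS]
    simp only [C, Matrix.smul_mul, Matrix.mul_smul, smul_smul, hSS]
    module
  rw [← hsum]
  exact posSemidef_sum _ fun i _ => hterm i

end Matrix

theorem stmt_12_general {k n : ℕ} (m : Fin k → ℕ)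
    (η : ℝ) (hη : 0 < η) (σ : Fin k → ℝ) (hσ : ∀ i, 0 < σ i)
    (Q : ∀ i, Matrix (Fin (m i)) (Fin n) ℝ) :
    (η⁻¹ • ((k : ℝ) • (1 : Matrix (Fin n) (Fin n) ℝ) -
        (k : ℝ) ^ 2 • (∑ i, ((η / σ i ^ 2) • ((Q i)ᵀ * Q i) +
          (1 : Matrix (Fin n) (Fin n) ℝ)))⁻¹) -
      ∑ i, (Q i)ᵀ * (η • (Q i * (Q i)ᵀ) +
        σ i ^ 2 • (1 : Matrix (Fin (m i)) (Fin (m i)) ℝ))⁻¹ * Q i).PosSemidef := by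
  set B : Fin k → Matrix (Fin n) (Fin n) ℝ := fun i => (η / σ i ^ 2) • ((Q i)ᵀ * Q i) + 1
  have hσ2 : ∀ i, 0 < σ i ^ 2 := fun i => pow_pos (hσ i) 2
  have hB : ∀ i, (B i).PosDef := fun i =>
    PosDef.smul_transpose_mul_self_add (Q i) (div_pos hη (hσ2 i)).le PosDef.one
  have hpush : ∀ i, (Q i)ᵀ * (η • (Q i * (Q i)ᵀ) + σ i ^ 2 • 1)⁻¹ * Q i =
      η⁻¹ • (1 - (B i)⁻¹) := fun i => by
    have hA : (η • (Q i * (Q i)ᵀ) + σ i ^ 2 • 1).PosDef := by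
      simpa using PosDef.smul_transpose_mul_self_add (Q i)ᵀ hη.le (PosDef.one.smul (hσ2 i))
    exact transpose_mul_inv_mul_eq_smul_one_sub_inv hη.ne' (hσ2 i).ne' (Q i)
      hA.det_pos.ne'.isUnit (hB i).det_pos.ne'.isUnit
  have hmean := posSemidef_sum_inv_sub_card_sq_smul_inv_sum B hB
  rw [Fintype.card_fin] at hmean
  rw [Finset.sum_congr rfl fun i _ => hpush i, ← Finset.smul_sum, Finset.sum_sub_distrib,
    Finset.sum_const, Finset.card_univ, Fintype.card_fin, ← Nat.cast_smul_eq_nsmul ℝ, ← smul_sub,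
    sub_sub_sub_cancel_left]
  exact hmean.smul (inv_nonneg.mpr hη.le)

/-- Matrix arithmetic–harmonic mean bound \eqref{Generalized} of the paper, in the Loewner
order: `∑ᵢ Qᵢᵀ (η Qᵢ Qᵢᵀ + σᵢ² I)⁻¹ Qᵢ ≼ (1/η) (k I − k² (∑ᵢ ((η/σᵢ²) Qᵢᵀ Qᵢ + I))⁻¹)`,
i.e. the difference of the right-hand side and the left-hand side is positive
semidefinite. -/
theorem stmt_12 {k n : ℕ} (hk : 1 ≤ k) (m : Fin k → ℕ)
    (η : ℝ) (hη : 0 < η) (σ : Fin k → ℝ) (hσ : ∀ i, 0 < σ i)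
    (Q : ∀ i, Matrix (Fin (m i)) (Fin n) ℝ) :
    (η⁻¹ • ((k : ℝ) • (1 : Matrix (Fin n) (Fin n) ℝ) -
        (k : ℝ) ^ 2 • (∑ i, ((η / σ i ^ 2) • ((Q i)ᵀ * Q i) +
          (1 : Matrix (Fin n) (Fin n) ℝ)))⁻¹) -
      ∑ i, (Q i)ᵀ * (η • (Q i * (Q i)ᵀ) +
        σ i ^ 2 • (1 : Matrix (Fin (m i)) (Fin (m i)) ℝ))⁻¹ * Q i).PosSemidef :=
  stmt_12_general m η hη σ hσ Q
end

section
/- Let k ≥ 1 and N ≥ 1 be integers, let η > 0 and σ₁, …, σ_k > 0, and let m₁, …, m_k be positive integers. For each i let Q_i be a real m_i × 2N matrix with Q_iᵀ Q_i = (m_i/2) · I_{2N}. Then Tr[( I_{2N} + ∑_{i=1}^{k} Q_iᵀ (η Q_i Q_iᵀ + σ_i² I_{m_i})⁻¹ Q_i )⁻¹] = 2N / ( 1 + ∑_{i=1}^{k} m_i / (η m_i + 2σ_i²) ). -/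
/-!
If `Qᵀ Q = c I`, then `(η Q Qᵀ + s I) Q = (η c + s) Q`, so the invertible matrix
`η Q Qᵀ + s I` has inverse acting on `Q` as the scalar `(η c + s)⁻¹`, and
`Qᵀ (η Q Qᵀ + s I)⁻¹ Q = c / (η c + s) · I`. With `c = mᵢ/2` and `s = σᵢ²` the matrix to be
inverted is `(1 + ∑ᵢ mᵢ/(η mᵢ + 2σᵢ²)) · I`.
-/

open Matrix

namespace Matrix

variable {m n K : Type*}

theorem trace_inv_smul_one [Fintype n] [DecidableEq n] [Field K] (a : K) :
    trace ((a • (1 : Matrix n n K))⁻¹) = Fintype.card n / a := by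
  rcases eq_or_ne a 0 with rfl | ha
  · simp
  · have hinv : a • (1 : Matrix n n K) * a⁻¹ • 1 = 1 := by
      rw [smul_mul_smul_comm, mul_inv_cancel₀ ha, Matrix.one_mul, one_smul]
    rw [inv_eq_right_inv hinv, trace_smul, trace_one, smul_eq_mul, div_eq_inv_mul]

theorem smul_mul_transpose_add_smul_one_mul [Fintype m] [DecidableEq m] [Fintype n]
    [DecidableEq n] [CommRing K] {Q : Matrix m n K} {c : K} (hQ : Qᵀ * Q = c • 1) (η s : K) :
    (η • (Q * Qᵀ) + s • 1) * Q = (η * c + s) • Q := by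
  rw [Matrix.add_mul, Matrix.smul_mul, Matrix.smul_mul, Matrix.one_mul, Matrix.mul_assoc, hQ,
    Matrix.mul_smul, Matrix.mul_one, smul_smul, add_smul]

theorem inv_mul_eq_inv_smul_of_mul_eq_smul [Fintype m] [DecidableEq m] [Field K]
    {A : Matrix m m K} {Q : Matrix m n K} {r : K} (hA : IsUnit A.det) (hr : r ≠ 0)
    (hAQ : A * Q = r • Q) : A⁻¹ * Q = r⁻¹ • Q := by
  calc A⁻¹ * Q = r⁻¹ • (A⁻¹ * (A * Q)) := by
        rw [hAQ, Matrix.mul_smul, smul_smul, inv_mul_cancel₀ hr, one_smul]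
    _ = r⁻¹ • Q := by rw [← Matrix.mul_assoc, nonsing_inv_mul A hA, Matrix.one_mul]

theorem posDef_smul_mul_transpose_add_smul_one_s16 [Fintype m] [DecidableEq m] [Fintype n]
    (Q : Matrix m n ℝ) {η s : ℝ} (hη : 0 ≤ η) (hs : 0 < s) :
    (η • (Q * Qᵀ) + s • 1).PosDef := by
  have hQQ : (Q * Qᵀ).PosSemidef := by
    simpa using posSemidef_self_mul_conjTranspose Q
  exact PosDef.posSemidef_add (hQQ.smul hη) (PosDef.one.smul hs)

theorem transpose_mul_inv_mul_of_transpose_mul_eq_smul [Fintype m] [DecidableEq m] [Fintype n]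
    [DecidableEq n] {Q : Matrix m n ℝ} {c η s : ℝ}
    (hQ : Qᵀ * Q = c • 1) (hc : 0 ≤ c) (hη : 0 ≤ η) (hs : 0 < s) :
    Qᵀ * (η • (Q * Qᵀ) + s • 1)⁻¹ * Q = (c / (η * c + s)) • 1 := by
  have hr : η * c + s ≠ 0 := by positivity
  have hdet := (posDef_smul_mul_transpose_add_smul_one_s16 Q hη hs).det_pos.ne'.isUnit
  rw [Matrix.mul_assoc, inv_mul_eq_inv_smul_of_mul_eq_smul hdet hr
    (smul_mul_transpose_add_smul_one_mul hQ η s), Matrix.mul_smul, hQ, smul_smul, inv_mul_eq_div]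

end Matrix

theorem stmt_16_general {k N : ℕ}
    (η : ℝ) (hη : 0 < η) (σ : Fin k → ℝ) (hσ : ∀ i, 0 < σ i)
    (m : Fin k → ℕ)
    (Q : ∀ i, Matrix (Fin (m i)) (Fin N ⊕ Fin N) ℝ)
    (hQ : ∀ i, (Q i)ᵀ * Q i =
      ((m i : ℝ) / 2) • (1 : Matrix (Fin N ⊕ Fin N) (Fin N ⊕ Fin N) ℝ)) :
    Matrix.trace
        ((1 + ∑ i, (Q i)ᵀ * (η • (Q i * (Q i)ᵀ) +
          σ i ^ 2 • (1 : Matrix (Fin (m i)) (Fin (m i)) ℝ))⁻¹ * Q i)⁻¹) =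
      (2 * N : ℝ) / (1 + ∑ i, (m i : ℝ) / (η * m i + 2 * σ i ^ 2)) := by
  have hterm : ∀ i, (Q i)ᵀ * (η • (Q i * (Q i)ᵀ) + σ i ^ 2 • 1)⁻¹ * Q i =
      ((m i : ℝ) / (η * m i + 2 * σ i ^ 2)) •
        (1 : Matrix (Fin N ⊕ Fin N) (Fin N ⊕ Fin N) ℝ) := by
    intro i
    have hσ2 := pow_pos (hσ i) 2
    rw [transpose_mul_inv_mul_of_transpose_mul_eq_smul (hQ i) (by positivity) hη.le hσ2]
    congr 1
    field_simp
  simp_rw [hterm, ← Finset.sum_smul]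
  nth_rw 1 [← one_smul ℝ (1 : Matrix (Fin N ⊕ Fin N) (Fin N ⊕ Fin N) ℝ)]
  rw [← add_smul, trace_inv_smul_one, Fintype.card_sum, Fintype.card_fin]
  push_cast
  ring

/-- Distortion formula for uniform sampling (tightness of \eqref{m1minimizesD} is a
consequence): if `Qᵢᵀ Qᵢ = (mᵢ/2) I_{2N}` for every `i` (the `2N` coordinates are modelled
by `Fin N ⊕ Fin N`), then
`Tr[(I + ∑ᵢ Qᵢᵀ (η Qᵢ Qᵢᵀ + σᵢ² I)⁻¹ Qᵢ)⁻¹] = 2N / (1 + ∑ᵢ mᵢ/(η mᵢ + 2σᵢ²))`. -/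
theorem stmt_16 {k N : ℕ} (hk : 1 ≤ k) (hN : 1 ≤ N)
    (η : ℝ) (hη : 0 < η) (σ : Fin k → ℝ) (hσ : ∀ i, 0 < σ i)
    (m : Fin k → ℕ) (hm : ∀ i, 0 < m i)
    (Q : ∀ i, Matrix (Fin (m i)) (Fin N ⊕ Fin N) ℝ)
    (hQ : ∀ i, (Q i)ᵀ * Q i =
      ((m i : ℝ) / 2) • (1 : Matrix (Fin N ⊕ Fin N) (Fin N ⊕ Fin N) ℝ)) :
    Matrix.trace
        ((1 + ∑ i, (Q i)ᵀ * (η • (Q i * (Q i)ᵀ) +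
          σ i ^ 2 • (1 : Matrix (Fin (m i)) (Fin (m i)) ℝ))⁻¹ * Q i)⁻¹) =
      (2 * N : ℝ) / (1 + ∑ i, (m i : ℝ) / (η * m i + 2 * σ i ^ 2)) :=
  stmt_16_general η hη σ hσ m Q hQ
end
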